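/- arXiv:1808.00538 — 8 statements merged into one kernel-verified Lean document; each statement's English description precedes it below -/
import Mathlib

section
/- There exists a constant $y_0\in(0,1)$, not depending on $n$ nor on the probability vector $(p_k)_{k\ge 1}$, such that for every sequence $(p_k)_{k\ge1}$ of strictly positive reals with $\sum_{k\ge1}p_k=1$ and every integer $n\ge 2$, $\mathbb{E}\,\sup_{s\in[0,1]}\big|\bar K_n(s)-\bar\rho(n^s)\big| \le 4\big(\bar\rho(n)-\bar\rho(y_0\, n(\log n)^{-2})\big)+2\,\bar\rho(n)(\log n)^{-1}+\int_1^\infty x^{-2}\big(\bar\rho(nx)-\bar\rho(n)\big)\,\mathrm{d}x+2\sup_{s\in[0,1]}\big(\bar\rho(e\,n^s)-\bar\rho(e^{-1}n^s)\big)$. -/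
open MeasureTheory ProbabilityTheory Set

noncomputable section

/-- `rhoBar p t = #{k : p k ≥ 1/t}`, the number of boxes with probability at least `1/t`. -/
def rhoBar (p : ℕ → ℝ) (t : ℝ) : ℕ := Nat.card {k : ℕ | p k ≥ 1 / t}

/-- `Zbar X n k ω`: the number of the first `n` balls falling into box `k`. -/
def Zbar {Ω : Type*} (X : ℕ → Ω → ℕ) (n : ℕ) (k : ℕ) (ω : Ω) : ℕ :=
  ((Finset.range n).filter (fun i => X i ω = k)).card

/-- `Kbar X n s ω`: the number of boxes containing at least `n^(1-s)` of the first `n` balls. -/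
def Kbar {Ω : Type*} (X : ℕ → Ω → ℕ) (n : ℕ) (s : ℝ) (ω : Ω) : ℕ :=
  Nat.card {k : ℕ | ((Zbar X n k ω : ℝ)) ≥ (n : ℝ) ^ ((1 : ℝ) - s)}

/-!
For each `s`, a box counted by exactly one of `Kbar X n s` and `rhoBar p (n ^ s)` either has
mean occupancy `n * p k` within a factor `e` of the threshold `n ^ (1 - s)`, and is then counted
by the window `rhoBar p (e n ^ s) - rhoBar p (n ^ s / e)`, or has occupancy off its mean by a
factor `e`. The second kind of box does not depend on `s`, so the supremum over `s` costs only
the window supremum plus the number of such deviant boxes, whose expectation is a sum of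
probabilities over boxes. A box with `n p_k < 1` deviates with probability at most `n p_k`
(union bound), and these terms add up to the integral; a box with `1 ≤ n p_k < 4 log² n`
contributes at most `1`; for the remaining boxes, Chernoff bounds for the binomial occupancy
give at most `2 / log n` each. The split point `n p_k = 4 log² n` is `p_k = log² n / (y₀ n)` with
`y₀ = 1 / 4`.
-/

open scoped ENNReal

lemma Summable.finite_setOf_le {ι : Type*} {p : ι → ℝ} (hs : Summable p) {c : ℝ} (hc : 0 < c) :
    {k | c ≤ p k}.Finite := by
  simpa using Filter.eventually_cofinite.mp (hs.tendsto_cofinite_zero.eventually (gt_mem_nhds hc))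

lemma abs_ncard_sub_ncard_le {α : Type*} {A B C : Set α} (hA : A.Finite) (hB : B.Finite)
    (hC : C.Finite) (hAB : A \ B ⊆ C) (hBA : B \ A ⊆ C) :
    |(A.ncard : ℝ) - B.ncard| ≤ C.ncard := by
  have hA' : A.ncard ≤ B.ncard + C.ncard :=
    (Set.ncard_le_ncard (Set.sdiff_subset_iff.mp hAB) (hB.union hC)).trans (Set.ncard_union_le B C)
  have hB' : B.ncard ≤ A.ncard + C.ncard :=
    (Set.ncard_le_ncard (Set.sdiff_subset_iff.mp hBA) (hA.union hC)).trans (Set.ncard_union_le A C)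
  rw [abs_sub_le_iff]
  constructor
  · linarith [(by exact_mod_cast hA' : (A.ncard : ℝ) ≤ B.ncard + C.ncard)]
  · linarith [(by exact_mod_cast hB' : (B.ncard : ℝ) ≤ A.ncard + C.ncard)]

lemma threshold_crossing {c t m z : ℝ} (hc : 1 ≤ c) (ht : 1 ≤ t) (h : t ≤ z ↔ m < t) :
    (t / c ≤ m ∧ m < c * t) ∨ (1 ≤ z ∧ c * m ≤ z) ∨ (1 ≤ m ∧ z ≤ m / c) := by
  have hc0 : 0 < c := by linarith
  by_cases hz : t ≤ z
  · have hm := h.mp hz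
    by_cases hcm : c * m ≤ z
    · exact Or.inr (Or.inl ⟨ht.trans hz, hcm⟩)
    · refine Or.inl ⟨?_, hm.trans_le (le_mul_of_one_le_left (by linarith) hc)⟩
      rw [div_le_iff₀ hc0]
      linarith
  · have hm : t ≤ m := not_lt.mp (mt h.mpr hz)
    by_cases hzm : z ≤ m / c
    · exact Or.inr (Or.inr ⟨ht.trans hm, hzm⟩)
    · refine Or.inl ⟨(div_le_self (by linarith) hc).trans hm, ?_⟩
      rw [not_le, div_lt_iff₀ hc0] at hzm
      nlinarith

lemma abs_ncard_threshold_sub_le {α : Type*} {m z : α → ℝ} {c t : ℝ} (hc : 1 ≤ c) (ht : 1 ≤ t)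
    (hm : ∀ ε > 0, {k | ε ≤ m k}.Finite) (hz : {k | 1 ≤ z k}.Finite) :
    |({k | t ≤ z k}.ncard : ℝ) - {k | t ≤ m k}.ncard|
      ≤ ({k | t / c ≤ m k}.ncard - {k | c * t ≤ m k}.ncard : ℝ)
        + {k | (1 ≤ z k ∧ c * m k ≤ z k) ∨ (1 ≤ m k ∧ z k ≤ m k / c)}.ncard := by
  set deviant := {k | (1 ≤ z k ∧ c * m k ≤ z k) ∨ (1 ≤ m k ∧ z k ≤ m k / c)}
  have hshell : {k | c * t ≤ m k} ⊆ {k | t / c ≤ m k} := fun k hk =>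
    ((div_le_self (by linarith) hc).trans (le_mul_of_one_le_left (by linarith) hc)).trans hk
  have hshell_fin : {k | t / c ≤ m k}.Finite := hm _ (by positivity)
  have hdeviant_fin : deviant.Finite :=
    (hz.union (hm 1 one_pos)).subset fun k hk => hk.imp (·.1) (·.1)
  have hcross : ∀ k, (t ≤ z k ↔ m k < t) →
      k ∈ ({k | t / c ≤ m k} \ {k | c * t ≤ m k}) ∪ deviant := fun k hk =>
    (threshold_crossing hc ht hk).imp (fun h => ⟨h.1, not_le.mpr h.2⟩) id
  calc |({k | t ≤ z k}.ncard : ℝ) - {k | t ≤ m k}.ncard|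
      ≤ (({k | t / c ≤ m k} \ {k | c * t ≤ m k}) ∪ deviant).ncard :=
        abs_ncard_sub_ncard_le (hz.subset fun k hk => ht.trans hk) (hm t (by positivity))
          (hshell_fin.sdiff.union hdeviant_fin)
          (fun k ⟨hkz, hkm⟩ => hcross k ⟨fun _ => not_le.mp hkm, fun _ => hkz⟩)
          (fun k ⟨hkm, hkz⟩ => hcross k ⟨fun h => absurd h hkz, fun h => absurd hkm (not_le.mpr h)⟩)
    _ ≤ ({k | t / c ≤ m k} \ {k | c * t ≤ m k}).ncard + deviant.ncard := by
        exact_mod_cast Set.ncard_union_le _ _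
    _ = _ := by rw [Set.cast_ncard_sdiff hshell hshell_fin]

section rhoBar

variable {p : ℕ → ℝ}

lemma rhoBar_eq_ncard (t : ℝ) : rhoBar p t = {k | 1 / t ≤ p k}.ncard := by
  rw [rhoBar, Nat.card_coe_set_eq]

lemma rhoBar_eq_ncard_le_mul {a b N : ℝ} (ha : 0 < a) (hb : 0 < b) (hab : a * b = N) :
    rhoBar p a = {k | b ≤ N * p k}.ncard := by
  rw [rhoBar_eq_ncard]
  congr with k
  rw [div_le_iff₀ ha, ← hab,
    show a * b * p k = b * (p k * a) by ring, le_mul_iff_one_le_right hb]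

lemma monotone_rhoBar (hp : ∀ k, 0 ≤ p k) (hs : Summable p) : Monotone (rhoBar p) := by
  intro t₁ t₂ h
  by_cases ht₁ : 0 < t₁
  · rw [rhoBar_eq_ncard, rhoBar_eq_ncard]
    exact Set.ncard_le_ncard (fun k hk => (one_div_le_one_div_of_le ht₁ h).trans hk)
      (hs.finite_setOf_le (by have := ht₁.trans_le h; positivity))
  · -- for `t₁ ≤ 0` every box qualifies, and `Nat.card` of an infinite set is `0`
    have hall : {k | 1 / t₁ ≤ p k} = Set.univ :=
      Set.eq_univ_of_forall fun k => (one_div_nonpos.mpr (not_lt.mp ht₁)).trans (hp k)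
    rw [rhoBar_eq_ncard t₁, hall, Set.ncard_univ, Nat.card_eq_zero_of_infinite]
    exact Nat.zero_le _

lemma rhoBar_sub_rhoBar (hs : Summable p) {t₁ t₂ : ℝ} (ht₁ : 0 < t₁) (h : t₁ ≤ t₂) :
    (rhoBar p t₂ : ℝ) - rhoBar p t₁ = {k | 1 / t₂ ≤ p k ∧ p k < 1 / t₁}.ncard := by
  have hsub : {k | 1 / t₁ ≤ p k} ⊆ {k | 1 / t₂ ≤ p k} := fun k hk =>
    (one_div_le_one_div_of_le ht₁ h).trans hk
  rw [rhoBar_eq_ncard, rhoBar_eq_ncard,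
    ← Set.cast_ncard_sdiff hsub (hs.finite_setOf_le (by have := ht₁.trans_le h; positivity))]
  congr with k
  simp only [Set.mem_sdiff, Set.mem_ofPred_eq, not_le]

end rhoBar

section Zbar

variable {Ω : Type*} (X : ℕ → Ω → ℕ) (n k : ℕ)

lemma Zbar_le (ω : Ω) : Zbar X n k ω ≤ n :=
  (Finset.card_filter_le _ _).trans (Finset.card_range n).le

lemma exists_eq_of_one_le_Zbar {ω : Ω} (h : 1 ≤ (Zbar X n k ω : ℝ)) :
    ∃ i ∈ Finset.range n, X i ω = k := by
  have : 0 < Zbar X n k ω := by exact_mod_cast h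
  obtain ⟨i, hi⟩ := Finset.card_pos.mp this
  exact ⟨i, (Finset.mem_filter.mp hi).1, (Finset.mem_filter.mp hi).2⟩

lemma finite_setOf_one_le_Zbar (ω : Ω) : {k | 1 ≤ (Zbar X n k ω : ℝ)}.Finite :=
  ((Finset.range n).image (X · ω)).finite_toSet.subset fun k hk => by
    obtain ⟨i, hi, rfl⟩ := exists_eq_of_one_le_Zbar X n k hk
    exact Finset.mem_image_of_mem _ hi

lemma cast_Zbar_eq_sum_indicator :
    (fun ω => (Zbar X n k ω : ℝ)) = ∑ i ∈ Finset.range n, {ω | X i ω = k}.indicator 1 := by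
  ext ω
  simp only [Zbar, Finset.card_filter, Nat.cast_sum, Finset.sum_apply, Set.indicator_apply,
    Set.mem_ofPred_eq, Nat.cast_ite, Nat.cast_one, Nat.cast_zero, Pi.one_apply]

lemma measurable_Zbar [MeasurableSpace Ω] {X : ℕ → Ω → ℕ} (hX : ∀ i, Measurable (X i)) :
    Measurable (fun ω => Zbar X n k ω) := by
  simp only [Zbar, Finset.card_filter]
  exact Finset.measurable_sum _ fun i _ =>
    Measurable.ite (hX i (measurableSet_singleton k)) measurable_const measurable_const

end Zbar

def deviantBoxes (p : ℕ → ℝ) {Ω : Type*} (X : ℕ → Ω → ℕ) (n : ℕ) (ω : Ω) : Set ℕ :=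
  {k | (1 ≤ (Zbar X n k ω : ℝ) ∧ Real.exp 1 * (n * p k) ≤ Zbar X n k ω)
    ∨ (1 ≤ n * p k ∧ (Zbar X n k ω : ℝ) ≤ n * p k / Real.exp 1)}

lemma measurableSet_mem_deviantBoxes {Ω : Type*} [MeasurableSpace Ω] {X : ℕ → Ω → ℕ}
    (hX : ∀ i, Measurable (X i)) (p : ℕ → ℝ) (n k : ℕ) :
    MeasurableSet {ω | k ∈ deviantBoxes p X n ω} :=
  measurable_Zbar n k hX (MeasurableSet.of_discrete (s := {z : ℕ |
    (1 ≤ (z : ℝ) ∧ Real.exp 1 * (n * p k) ≤ z) ∨ (1 ≤ n * p k ∧ (z : ℝ) ≤ n * p k / Real.exp 1)}))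

lemma abs_Kbar_sub_rhoBar_le {p : ℕ → ℝ} (hs : Summable p) {Ω : Type*} (X : ℕ → Ω → ℕ)
    {n : ℕ} (hn : 1 ≤ n) {s : ℝ} (hs01 : s ∈ Set.Icc (0 : ℝ) 1) (ω : Ω) :
    |(Kbar X n s ω : ℝ) - rhoBar p ((n : ℝ) ^ s)|
      ≤ ((rhoBar p (Real.exp 1 * (n : ℝ) ^ s) : ℝ) - rhoBar p ((n : ℝ) ^ s / Real.exp 1))
        + (deviantBoxes p X n ω).ncard := by
  have hn0 : (0 : ℝ) < n := by exact_mod_cast hn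
  have he : 0 < Real.exp 1 := Real.exp_pos 1
  set t := (n : ℝ) ^ ((1 : ℝ) - s)
  have ht : 1 ≤ t := Real.one_le_rpow (by exact_mod_cast hn) (by linarith [hs01.2])
  have hnt : (n : ℝ) ^ s * t = n := by
    rw [← Real.rpow_add hn0, add_sub_cancel, Real.rpow_one]
  have hns : 0 < (n : ℝ) ^ s := Real.rpow_pos_of_pos hn0 s
  have h1 : Real.exp 1 * (n : ℝ) ^ s * (t / Real.exp 1) = n := by field_simp; linear_combination hnt
  have h2 : (n : ℝ) ^ s / Real.exp 1 * (Real.exp 1 * t) = n := by field_simp; linear_combination hnt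
  rw [Kbar, Nat.card_coe_set_eq, rhoBar_eq_ncard_le_mul hns (by positivity) hnt,
    rhoBar_eq_ncard_le_mul (by positivity) (by positivity) h1,
    rhoBar_eq_ncard_le_mul (by positivity) (by positivity) h2]
  exact abs_ncard_threshold_sub_le (m := fun k => n * p k) (z := fun k => (Zbar X n k ω : ℝ))
    (Real.one_le_exp zero_le_one) ht (fun ε hε => (hs.mul_left (n : ℝ)).finite_setOf_le hε)
    (finite_setOf_one_le_Zbar X n ω)

lemma le_biSup_of_forall_le {ι : Type*} {g : ι → ℝ} {S : Set ι} {C : ℝ}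
    (hC : ∀ i ∈ S, g i ≤ C) {i : ι} (hi : i ∈ S) : g i ≤ ⨆ j ∈ S, g j :=
  le_ciSup₂ (f := fun j (_ : j ∈ S) => g j)
    ⟨C, by
      simp only [mem_upperBounds, Set.mem_iUnion, Set.mem_range]
      rintro _ ⟨j, hj, rfl⟩
      exact hC j hj⟩ i hi

lemma ENNReal.tsum_indicator_const_of_finite {α : Type*} {s : Set α} (hs : s.Finite) (c : ℝ≥0∞) :
    ∑' a, s.indicator (fun _ => c) a = s.ncard * c := by
  rw [← tsum_subtype, ENNReal.tsum_set_const, ← hs.cast_ncard_eq]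
  rfl

lemma lintegral_ncard_le_tsum_measure {α Ω : Type*} [Countable α] [MeasurableSpace Ω]
    (μ : Measure Ω) (S : Ω → Set α) (hS : ∀ a, MeasurableSet {ω | a ∈ S ω}) :
    ∫⁻ ω, ((S ω).ncard : ℝ≥0∞) ∂μ ≤ ∑' a, μ {ω | a ∈ S ω} :=
  calc ∫⁻ ω, ((S ω).ncard : ℝ≥0∞) ∂μ
      ≤ ∫⁻ ω, ∑' a, {ω | a ∈ S ω}.indicator 1 ω ∂μ := lintegral_mono fun ω =>
        calc ((S ω).ncard : ℝ≥0∞) ≤ (S ω).encard := by exact_mod_cast (S ω).ncard_le_encard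
          _ = ∑' a, (S ω).indicator 1 a := by rw [← ENNReal.tsum_set_one, ← tsum_subtype]; rfl
          _ = ∑' a, {ω | a ∈ S ω}.indicator 1 ω := rfl
    _ = ∑' a, μ {ω | a ∈ S ω} := by
        rw [lintegral_tsum fun a => (measurable_one.indicator (hS a)).aemeasurable]
        exact tsum_congr fun a => lintegral_indicator_one (hS a)

lemma mgf_indicator_one {Ω : Type*} [MeasurableSpace Ω] {μ : Measure Ω} [IsProbabilityMeasure μ]
    {A : Set Ω} (hA : MeasurableSet A) (t : ℝ) :
    mgf (A.indicator 1) μ t = 1 + μ.real A * (Real.exp t - 1) := by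
  have h : (fun ω => Real.exp (t * A.indicator 1 ω))
      = fun ω => A.indicator (fun _ => Real.exp t - 1) ω + 1 := by
    ext ω
    by_cases hω : ω ∈ A <;> simp [hω]
  rw [mgf, h, integral_add ((integrable_const _).indicator hA) (integrable_const 1),
    integral_indicator_const _ hA, integral_const, probReal_univ, smul_eq_mul, smul_eq_mul]
  ring

lemma exp_neg_add_exp_le_two_div {L m : ℝ} (hL : 0 < L) (hm : 4 * L ^ 2 ≤ m) :
    Real.exp (-m) + Real.exp ((2 / Real.exp 1 - 1) * m) ≤ 2 / L := by
  have he : 2 / Real.exp 1 - 1 ≤ -(1 / 4) := by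
    rw [sub_le_iff_le_add, div_le_iff₀ (Real.exp_pos 1)]
    linarith [Real.exp_one_gt_d9]
  have hm0 : 0 ≤ m := le_trans (by positivity) hm
  have hdecay : Real.exp (-(m / 4)) ≤ 1 / L := by
    rw [Real.exp_neg, inv_eq_one_div]
    apply one_div_le_one_div_of_le hL
    calc L ≤ L ^ 2 + 1 := by nlinarith [sq_nonneg (L - 1)]
      _ ≤ Real.exp (L ^ 2) := Real.add_one_le_exp _
      _ ≤ Real.exp (m / 4) := Real.exp_le_exp.mpr (by linarith)
  have h1 : Real.exp (-m) ≤ 1 / L := (Real.exp_le_exp.mpr (by linarith)).trans hdecay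
  have h2 : Real.exp ((2 / Real.exp 1 - 1) * m) ≤ 1 / L :=
    (Real.exp_le_exp.mpr (by nlinarith)).trans hdecay
  linarith [add_div 1 1 L]

section Occupancy

variable {Ω : Type*} [MeasurableSpace Ω] {P : Measure Ω} [IsProbabilityMeasure P]
  {X : ℕ → Ω → ℕ} (hX : ∀ i, Measurable (X i)) {n k : ℕ} {q : ℝ}

include hX

lemma integrable_exp_mul_Zbar (t : ℝ) :
    Integrable (fun ω => Real.exp (t * Zbar X n k ω)) P := by
  refine Integrable.of_bound
    (Real.measurable_exp.comp (measurable_from_nat.comp (measurable_Zbar n k hX)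
      |>.const_mul t)).aestronglyMeasurable (Real.exp (|t| * n)) (ae_of_all _ fun ω => ?_)
  rw [Real.norm_eq_abs, abs_of_pos (Real.exp_pos _), Real.exp_le_exp]
  have hZ : (Zbar X n k ω : ℝ) ≤ n := by exact_mod_cast Zbar_le X n k ω
  calc t * Zbar X n k ω ≤ |t| * Zbar X n k ω := by gcongr; exact le_abs_self t
    _ ≤ |t| * n := by gcongr

variable (hind : iIndepFun X P) (hq : 0 ≤ q) (hlaw : ∀ i, P {ω | X i ω = k} = ENNReal.ofReal q)
include hind hq hlaw

lemma mgf_Zbar_le (t : ℝ) :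
    mgf (fun ω => (Zbar X n k ω : ℝ)) P t ≤ Real.exp (n * q * (Real.exp t - 1)) := by
  have hmeas : ∀ i, MeasurableSet {ω | X i ω = k} := fun i => hX i (measurableSet_singleton k)
  have hindY : iIndepFun (fun i => {ω | X i ω = k}.indicator (1 : Ω → ℝ)) P :=
    hind.comp (fun _ => ({k} : Set ℕ).indicator 1) fun _ => measurable_from_top
  rw [cast_Zbar_eq_sum_indicator,
    hindY.mgf_sum (fun i => measurable_one.indicator (hmeas i))]
  calc ∏ i ∈ Finset.range n, mgf ({ω | X i ω = k}.indicator 1) P t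
      ≤ ∏ i ∈ Finset.range n, Real.exp (q * (Real.exp t - 1)) :=
        Finset.prod_le_prod (fun i _ => mgf_nonneg) fun i _ => by
          rw [mgf_indicator_one (hmeas i), measureReal_def, hlaw i, ENNReal.toReal_ofReal hq]
          linarith [Real.add_one_le_exp (q * (Real.exp t - 1))]
    _ = Real.exp (n * q * (Real.exp t - 1)) := by
        rw [Finset.prod_const, Finset.card_range, ← Real.exp_nat_mul, mul_assoc]

lemma measure_exp_one_mul_le_Zbar_le :
    P {ω | Real.exp 1 * (n * q) ≤ Zbar X n k ω} ≤ ENNReal.ofReal (Real.exp (-(n * q))) := by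
  rw [← ofReal_measureReal]
  refine ENNReal.ofReal_le_ofReal ?_
  calc P.real {ω | Real.exp 1 * (n * q) ≤ Zbar X n k ω}
      ≤ Real.exp (-1 * (Real.exp 1 * (n * q))) * mgf (fun ω => (Zbar X n k ω : ℝ)) P 1 :=
        measure_ge_le_exp_mul_mgf _ zero_le_one (by simpa using integrable_exp_mul_Zbar hX 1)
    _ ≤ Real.exp (-1 * (Real.exp 1 * (n * q))) * Real.exp (n * q * (Real.exp 1 - 1)) := by
        gcongr
        exact mgf_Zbar_le hX hind hq hlaw 1
    _ = Real.exp (-(n * q)) := by rw [← Real.exp_add]; ring_nf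

lemma measure_Zbar_le_div_exp_one_le :
    P {ω | (Zbar X n k ω : ℝ) ≤ n * q / Real.exp 1}
      ≤ ENNReal.ofReal (Real.exp ((2 / Real.exp 1 - 1) * (n * q))) := by
  rw [← ofReal_measureReal]
  refine ENNReal.ofReal_le_ofReal ?_
  calc P.real {ω | (Zbar X n k ω : ℝ) ≤ n * q / Real.exp 1}
      ≤ Real.exp (-(-1) * (n * q / Real.exp 1)) * mgf (fun ω => (Zbar X n k ω : ℝ)) P (-1) :=
        measure_le_le_exp_mul_mgf _ (by norm_num) (integrable_exp_mul_Zbar hX (-1))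
    _ ≤ Real.exp (-(-1) * (n * q / Real.exp 1)) * Real.exp (n * q * (Real.exp (-1) - 1)) := by
        gcongr
        exact mgf_Zbar_le hX hind hq hlaw (-1)
    _ = Real.exp ((2 / Real.exp 1 - 1) * (n * q)) := by
        rw [← Real.exp_add, Real.exp_neg]
        ring_nf

end Occupancy

section DeviantBoxes

variable {Ω : Type*} [MeasurableSpace Ω] {P : Measure Ω} {X : ℕ → Ω → ℕ} {p : ℕ → ℝ} {n k : ℕ}

variable (hlaw : ∀ i, P {ω | X i ω = k} = ENNReal.ofReal (p k))
include hlaw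

lemma measure_mem_deviantBoxes_le_mul (hk : n * p k < 1) :
    P {ω | k ∈ deviantBoxes p X n ω} ≤ ENNReal.ofReal (n * p k) := by
  have hsub : {ω | k ∈ deviantBoxes p X n ω} ⊆ ⋃ i ∈ Finset.range n, {ω | X i ω = k} := by
    rintro ω (⟨hZ, -⟩ | ⟨h1, -⟩)
    · obtain ⟨i, hi, hXi⟩ := exists_eq_of_one_le_Zbar X n k hZ
      exact Set.mem_biUnion hi hXi
    · exact absurd hk (not_lt.mpr h1)
  calc P {ω | k ∈ deviantBoxes p X n ω}
      ≤ ∑ i ∈ Finset.range n, P {ω | X i ω = k} :=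
        (measure_mono hsub).trans (measure_biUnion_finset_le _ _)
    _ = ENNReal.ofReal (n * p k) := by
        rw [Finset.sum_congr rfl fun i _ => hlaw i, Finset.sum_const, Finset.card_range,
          nsmul_eq_mul, ENNReal.ofReal_mul (Nat.cast_nonneg n), ENNReal.ofReal_natCast]

lemma measure_mem_deviantBoxes_le_exp [IsProbabilityMeasure P] (hX : ∀ i, Measurable (X i))
    (hind : iIndepFun X P) (hp : 0 ≤ p k) :
    P {ω | k ∈ deviantBoxes p X n ω}
      ≤ ENNReal.ofReal (Real.exp (-(n * p k)) + Real.exp ((2 / Real.exp 1 - 1) * (n * p k))) := by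
  have hsub : {ω | k ∈ deviantBoxes p X n ω}
      ⊆ {ω | Real.exp 1 * (n * p k) ≤ Zbar X n k ω}
        ∪ {ω | (Zbar X n k ω : ℝ) ≤ n * p k / Real.exp 1} := by
    rintro ω (⟨-, h⟩ | ⟨-, h⟩)
    exacts [Or.inl h, Or.inr h]
  rw [ENNReal.ofReal_add (Real.exp_nonneg _) (Real.exp_nonneg _)]
  exact (measure_mono hsub).trans <| (measure_union_le _ _).trans <|
    add_le_add (measure_exp_one_mul_le_Zbar_le hX hind hp hlaw)
      (measure_Zbar_le_div_exp_one_le hX hind hp hlaw)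

end DeviantBoxes

lemma lintegral_Ici_zpow_neg_two {a : ℝ} (ha : 0 < a) :
    ∫⁻ x in Set.Ici a, ENNReal.ofReal (x ^ (-2 : ℤ)) = ENNReal.ofReal a⁻¹ := by
  have hrpow : ∀ x : ℝ, x ^ (-2 : ℤ) = x ^ (-2 : ℝ) := fun x => by
    rw [← Real.rpow_intCast]; norm_num
  simp_rw [hrpow]
  rw [← Measure.restrict_congr_set Ioi_ae_eq_Ici,
    ← ofReal_integral_eq_lintegral_ofReal (integrableOn_Ioi_rpow_of_lt (by norm_num) ha)
      ((ae_restrict_iff' measurableSet_Ioi).mpr (ae_of_all _ fun x hx =>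
        Real.rpow_nonneg (ha.trans hx).le _)),
    integral_Ioi_rpow_of_lt (by norm_num) ha]
  norm_num [Real.rpow_neg_one]

lemma lintegral_Ioi_one_indicator_zpow {q : ℝ} (hq : 0 < q) :
    ∫⁻ x in Set.Ioi 1, {x | 1 ≤ x * q ∧ q < 1}.indicator (fun x => ENNReal.ofReal (x ^ (-2 : ℤ))) x
      = (Set.Iio 1).indicator ENNReal.ofReal q := by
  by_cases hq1 : q < 1
  · have hset : {x : ℝ | 1 ≤ x * q ∧ q < 1} = Set.Ici q⁻¹ := by
      ext x
      simp [hq1, inv_le_iff_one_le_mul₀ hq]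
    rw [hset, lintegral_indicator measurableSet_Ici, Measure.restrict_restrict measurableSet_Ici,
      Set.inter_eq_left.mpr (Set.Ici_subset_Ioi.mpr ((one_lt_inv₀ hq).mpr hq1)),
      lintegral_Ici_zpow_neg_two (inv_pos.mpr hq), inv_inv]
    exact (Set.indicator_of_mem (s := Set.Iio 1) hq1 ENNReal.ofReal).symm
  · simp [hq1]

lemma ofReal_zpow_mul_rhoBar_sub_eq_tsum {p : ℕ → ℝ} (hs : Summable p) {N x : ℝ} (hN : 0 < N)
    (hx : 1 ≤ x) :
    ENNReal.ofReal (x ^ (-2 : ℤ) * ((rhoBar p (N * x) : ℝ) - rhoBar p N))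
      = ∑' k, {x | 1 ≤ x * (N * p k) ∧ N * p k < 1}.indicator
          (fun x => ENNReal.ofReal (x ^ (-2 : ℤ))) x := by
  have hNx : 0 < N * x := by positivity
  have hfin : {k | 1 / (N * x) ≤ p k ∧ p k < 1 / N}.Finite :=
    (hs.finite_setOf_le (by positivity)).subset fun k hk => hk.1
  rw [rhoBar_sub_rhoBar hs hN (le_mul_of_one_le_right hN.le hx),
    ENNReal.ofReal_mul (zpow_nonneg (by linarith) _), ENNReal.ofReal_natCast, mul_comm,
    ← ENNReal.tsum_indicator_const_of_finite hfin]
  refine tsum_congr fun k => ?_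
  simp only [Set.indicator_apply, Set.mem_ofPred_eq]
  congr 1
  rw [div_le_iff₀ hNx, lt_div_iff₀ hN]
  exact propext (by constructor <;> rintro ⟨h1, h2⟩ <;> constructor <;> linarith)

lemma zpow_mul_rhoBar_sub_nonneg {p : ℕ → ℝ} (hp : ∀ k, 0 ≤ p k) (hs : Summable p) {N x : ℝ}
    (hN : 0 ≤ N) (hx : 1 ≤ x) : 0 ≤ x ^ (-2 : ℤ) * ((rhoBar p (N * x) : ℝ) - rhoBar p N) :=
  mul_nonneg (zpow_nonneg (by linarith) _)
    (sub_nonneg.mpr (by exact_mod_cast monotone_rhoBar hp hs (le_mul_of_one_le_right hN hx)))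

lemma tsum_indicator_ofReal_eq_integral {p : ℕ → ℝ} (hp : ∀ k, 0 < p k) (hs : Summable p) {N : ℝ}
    (hN : 0 < N) :
    ∑' k, (Set.Iio 1).indicator ENNReal.ofReal (N * p k) = ENNReal.ofReal
      (∫ x in Set.Ioi 1, x ^ (-2 : ℤ) * ((rhoBar p (N * x) : ℝ) - rhoBar p N)) := by
  have hmono := monotone_rhoBar (fun k => (hp k).le) hs
  have hf_meas : Measurable fun x : ℝ => x ^ (-2 : ℤ) * ((rhoBar p (N * x) : ℝ) - rhoBar p N) :=
    (by fun_prop : Measurable fun x : ℝ => x ^ (-2 : ℤ)).mul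
      ((Nat.mono_cast.comp (hmono.comp (monotone_mul_left_of_nonneg hN.le))).measurable.sub_const _)
  have hlint : ∫⁻ x in Set.Ioi 1,
      ENNReal.ofReal (x ^ (-2 : ℤ) * ((rhoBar p (N * x) : ℝ) - rhoBar p N))
        = ∑' k, (Set.Iio 1).indicator ENNReal.ofReal (N * p k) := by
    rw [setLIntegral_congr_fun measurableSet_Ioi fun x hx =>
      ofReal_zpow_mul_rhoBar_sub_eq_tsum hs hN hx.out.le, lintegral_tsum fun k => by measurability]
    exact tsum_congr fun k => lintegral_Ioi_one_indicator_zpow (mul_pos hN (hp k))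
  have hfin : ∑' k, (Set.Iio 1).indicator ENNReal.ofReal (N * p k) ≠ ⊤ :=
    ne_top_of_le_ne_top (b := ∑' k, ENNReal.ofReal (N * p k))
      (by rw [← ENNReal.ofReal_tsum_of_nonneg (fun k => (mul_pos hN (hp k)).le) (hs.mul_left N)]
          exact ENNReal.ofReal_ne_top)
      (ENNReal.tsum_le_tsum fun k => Set.indicator_le_self _ _ _)
  have hf_nonneg : ∀ᵐ x ∂volume.restrict (Set.Ioi 1),
      0 ≤ x ^ (-2 : ℤ) * ((rhoBar p (N * x) : ℝ) - rhoBar p N) :=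
    (ae_restrict_iff' measurableSet_Ioi).mpr <| ae_of_all _ fun x hx =>
      zpow_mul_rhoBar_sub_nonneg (fun k => (hp k).le) hs hN.le hx.out.le
  rw [integral_eq_lintegral_of_nonneg_ae hf_nonneg hf_meas.aestronglyMeasurable, hlint,
    ENNReal.ofReal_toReal hfin]

lemma iSup_rhoBar_window_nonneg {p : ℕ → ℝ} (hp : ∀ k, 0 ≤ p k) (hs : Summable p) (n : ℕ) :
    0 ≤ ⨆ s ∈ Set.Icc (0 : ℝ) 1,
      ((rhoBar p (Real.exp 1 * (n : ℝ) ^ s) : ℝ) - rhoBar p ((n : ℝ) ^ s / Real.exp 1)) :=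
  Real.iSup_nonneg fun s => Real.iSup_nonneg fun _ => sub_nonneg.mpr <| by
    have hns : 0 ≤ (n : ℝ) ^ s := Real.rpow_nonneg n.cast_nonneg s
    exact_mod_cast monotone_rhoBar hp hs <|
      (div_le_self hns (Real.one_le_exp zero_le_one)).trans
        (le_mul_of_one_le_left hns (Real.one_le_exp zero_le_one))

lemma lintegral_iSup_abs_Kbar_sub_rhoBar_le_add_tsum {p : ℕ → ℝ} (hp : ∀ k, 0 ≤ p k)
    (hs : Summable p) {Ω : Type*} [MeasurableSpace Ω] (P : Measure Ω) [IsProbabilityMeasure P]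
    {X : ℕ → Ω → ℕ} (hX : ∀ i, Measurable (X i)) {n : ℕ} (hn : 1 ≤ n) :
    ∫⁻ ω, ENNReal.ofReal (⨆ s ∈ Set.Icc (0 : ℝ) 1,
        |(Kbar X n s ω : ℝ) - rhoBar p ((n : ℝ) ^ s)|) ∂P
      ≤ ENNReal.ofReal (⨆ s ∈ Set.Icc (0 : ℝ) 1,
          ((rhoBar p (Real.exp 1 * (n : ℝ) ^ s) : ℝ) - rhoBar p ((n : ℝ) ^ s / Real.exp 1)))
        + ∑' k, P {ω | k ∈ deviantBoxes p X n ω} := by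
  set D := ⨆ s ∈ Set.Icc (0 : ℝ) 1,
    ((rhoBar p (Real.exp 1 * (n : ℝ) ^ s) : ℝ) - rhoBar p ((n : ℝ) ^ s / Real.exp 1))
  have hD := iSup_rhoBar_window_nonneg hp hs n
  have hbound : ∀ s ∈ Set.Icc (0 : ℝ) 1,
      (rhoBar p (Real.exp 1 * (n : ℝ) ^ s) : ℝ) - rhoBar p ((n : ℝ) ^ s / Real.exp 1)
        ≤ rhoBar p (Real.exp 1 * n) := fun s hs01 => by
    have hns : (n : ℝ) ^ s ≤ n := by
      simpa using Real.rpow_le_rpow_of_exponent_le (by exact_mod_cast hn) hs01.2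
    have hmono : rhoBar p (Real.exp 1 * (n : ℝ) ^ s) ≤ rhoBar p (Real.exp 1 * n) :=
      monotone_rhoBar hp hs (by gcongr)
    exact (sub_le_self _ (Nat.cast_nonneg _)).trans (by exact_mod_cast hmono)
  have hpoint : ∀ ω, ENNReal.ofReal (⨆ s ∈ Set.Icc (0 : ℝ) 1,
      |(Kbar X n s ω : ℝ) - rhoBar p ((n : ℝ) ^ s)|)
        ≤ ENNReal.ofReal D + (deviantBoxes p X n ω).ncard := fun ω => by
    have hsum := add_nonneg hD (Nat.cast_nonneg (α := ℝ) (deviantBoxes p X n ω).ncard)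
    rw [← ENNReal.ofReal_natCast, ← ENNReal.ofReal_add hD (Nat.cast_nonneg _)]
    refine ENNReal.ofReal_le_ofReal <|
      Real.iSup_le (fun s => Real.iSup_le (fun hs01 => ?_) hsum) hsum
    linarith [abs_Kbar_sub_rhoBar_le hs X hn hs01 ω, le_biSup_of_forall_le hbound hs01]
  calc _ ≤ ∫⁻ ω, (ENNReal.ofReal D + (deviantBoxes p X n ω).ncard) ∂P := lintegral_mono hpoint
    _ = ENNReal.ofReal D + ∫⁻ ω, ((deviantBoxes p X n ω).ncard : ℝ≥0∞) ∂P := by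
        rw [lintegral_add_left measurable_const, lintegral_const, measure_univ, mul_one]
    _ ≤ _ := by
        gcongr
        exact lintegral_ncard_le_tsum_measure P _ (measurableSet_mem_deviantBoxes hX p n)

section ExpectedDeviation

variable {p : ℕ → ℝ} (hp : ∀ k, 0 < p k) {Ω : Type*} [MeasurableSpace Ω] {P : Measure Ω}
  [IsProbabilityMeasure P] {X : ℕ → Ω → ℕ} (hX : ∀ i, Measurable (X i)) (hind : iIndepFun X P)
  (hlaw : ∀ i k, P {ω | X i ω = k} = ENNReal.ofReal (p k))
  {n : ℕ} (hn : 1 ≤ n) {t L : ℝ} (ht : 0 < t) (hL : 0 < L) (htL : 4 * L ^ 2 * t ≤ n)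
include hp hX hind hlaw hn ht hL htL

lemma measure_mem_deviantBoxes_le_indicator (k : ℕ) :
    P {ω | k ∈ deviantBoxes p X n ω}
      ≤ (Set.Iio 1).indicator ENNReal.ofReal (n * p k)
        + {k | 1 / n ≤ p k ∧ p k < 1 / t}.indicator (fun _ => 1) k
        + {k | 1 / t ≤ p k}.indicator (fun _ => ENNReal.ofReal (2 / L)) k := by
  have hn0 : (0 : ℝ) < n := by exact_mod_cast hn
  by_cases hsmall : n * p k < 1
  · rw [Set.indicator_of_mem (s := Set.Iio 1) hsmall]
    exact (measure_mem_deviantBoxes_le_mul (hlaw · k) hsmall).trans (le_self_add.trans le_self_add)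
  by_cases hmid : p k < 1 / t
  · have hk : k ∈ {k | 1 / n ≤ p k ∧ p k < 1 / t} :=
      ⟨by rw [div_le_iff₀ hn0]; linarith, hmid⟩
    rw [Set.indicator_of_mem hk]
    exact prob_le_one.trans (le_add_self.trans le_self_add)
  · have hlarge : 4 * L ^ 2 ≤ n * p k := by
      have h1 : 1 ≤ p k * t := (div_le_iff₀ ht).mp (not_lt.mp hmid)
      nlinarith [hp k]
    rw [Set.indicator_of_mem (s := {k | 1 / t ≤ p k}) (not_lt.mp hmid)]
    exact (measure_mem_deviantBoxes_le_exp (hlaw · k) hX hind (hp k).le).trans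
      ((ENNReal.ofReal_le_ofReal (exp_neg_add_exp_le_two_div hL hlarge)).trans le_add_self)

lemma tsum_measure_mem_deviantBoxes_le (hs : Summable p) (htn : t ≤ n) :
    ∑' k, P {ω | k ∈ deviantBoxes p X n ω}
      ≤ ENNReal.ofReal (∫ x in Set.Ioi 1, x ^ (-2 : ℤ) * ((rhoBar p (n * x) : ℝ) - rhoBar p n))
        + ENNReal.ofReal ((rhoBar p n : ℝ) - rhoBar p t)
        + ENNReal.ofReal (rhoBar p t * (2 / L)) := by
  have hn0 : (0 : ℝ) < n := by exact_mod_cast hn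
  calc ∑' k, P {ω | k ∈ deviantBoxes p X n ω}
      ≤ ∑' k, ((Set.Iio 1).indicator ENNReal.ofReal (n * p k)
        + {k | 1 / n ≤ p k ∧ p k < 1 / t}.indicator (fun _ => 1) k
        + {k | 1 / t ≤ p k}.indicator (fun _ => ENNReal.ofReal (2 / L)) k) :=
        ENNReal.tsum_le_tsum (measure_mem_deviantBoxes_le_indicator hp hX hind hlaw hn ht hL htL)
    _ = _ := by
        rw [ENNReal.tsum_add, ENNReal.tsum_add, tsum_indicator_ofReal_eq_integral hp hs hn0,
          ENNReal.tsum_indicator_const_of_finite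
            ((hs.finite_setOf_le (by positivity)).subset fun k hk => hk.1),
          ENNReal.tsum_indicator_const_of_finite (hs.finite_setOf_le (by positivity)),
          mul_one, ← ENNReal.ofReal_natCast, ← rhoBar_sub_rhoBar hs ht htn,
          ← rhoBar_eq_ncard, ← ENNReal.ofReal_natCast, ← ENNReal.ofReal_mul (Nat.cast_nonneg _)]

lemma lintegral_iSup_abs_Kbar_sub_rhoBar_le (hs : Summable p) (htn : t ≤ n) :
    ∫⁻ ω, ENNReal.ofReal (⨆ s ∈ Set.Icc (0 : ℝ) 1,
        |(Kbar X n s ω : ℝ) - rhoBar p ((n : ℝ) ^ s)|) ∂P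
      ≤ ENNReal.ofReal (4 * ((rhoBar p n : ℝ) - rhoBar p t) + 2 * (rhoBar p n : ℝ) / L
        + (∫ x in Set.Ioi 1, x ^ (-2 : ℤ) * ((rhoBar p (n * x) : ℝ) - rhoBar p n))
        + 2 * ⨆ s ∈ Set.Icc (0 : ℝ) 1,
          ((rhoBar p (Real.exp 1 * (n : ℝ) ^ s) : ℝ) - rhoBar p ((n : ℝ) ^ s / Real.exp 1))) := by
  set D := ⨆ s ∈ Set.Icc (0 : ℝ) 1,
    ((rhoBar p (Real.exp 1 * (n : ℝ) ^ s) : ℝ) - rhoBar p ((n : ℝ) ^ s / Real.exp 1))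
  set I := ∫ x in Set.Ioi 1, x ^ (-2 : ℤ) * ((rhoBar p (n * x) : ℝ) - rhoBar p n)
  have hp' : ∀ k, 0 ≤ p k := fun k => (hp k).le
  have hD : 0 ≤ D := iSup_rhoBar_window_nonneg hp' hs n
  have hI : 0 ≤ I := setIntegral_nonneg measurableSet_Ioi fun x hx =>
    zpow_mul_rhoBar_sub_nonneg hp' hs n.cast_nonneg hx.out.le
  have hρ : (rhoBar p t : ℝ) ≤ rhoBar p n := by exact_mod_cast monotone_rhoBar hp' hs htn
  have hB : 0 ≤ (rhoBar p t : ℝ) * (2 / L) := mul_nonneg (Nat.cast_nonneg _) (by positivity)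
  have hρL : (rhoBar p t : ℝ) * (2 / L) ≤ 2 * rhoBar p n / L := by
    rw [mul_div_assoc', mul_comm]
    gcongr
  calc _ ≤ ENNReal.ofReal D + ∑' k, P {ω | k ∈ deviantBoxes p X n ω} :=
        lintegral_iSup_abs_Kbar_sub_rhoBar_le_add_tsum hp' hs P hX hn
    _ ≤ ENNReal.ofReal D + (ENNReal.ofReal I + ENNReal.ofReal ((rhoBar p n : ℝ) - rhoBar p t)
          + ENNReal.ofReal (rhoBar p t * (2 / L))) :=
        add_le_add_right (tsum_measure_mem_deviantBoxes_le hp hX hind hlaw hn ht hL htL hs htn) _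
    _ = ENNReal.ofReal (D + (I + ((rhoBar p n : ℝ) - rhoBar p t) + rhoBar p t * (2 / L))) := by
        rw [ENNReal.ofReal_add hD (by linarith), ENNReal.ofReal_add (by linarith) hB,
          ENNReal.ofReal_add hI (by linarith)]
    _ ≤ _ := ENNReal.ofReal_le_ofReal (by linarith)

end ExpectedDeviation

theorem universal_estimate_for_occupancy_counts :
    ∃ y₀ : ℝ, y₀ ∈ Set.Ioo (0 : ℝ) 1 ∧
      ∀ (p : ℕ → ℝ), (∀ k, 0 < p k) → (∑' k, p k) = 1 →
      ∀ (Ω : Type) (_ : MeasurableSpace Ω) (P : Measure Ω), IsProbabilityMeasure P →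
      ∀ (X : ℕ → Ω → ℕ), (∀ i, Measurable (X i)) →
        iIndepFun X P →
        (∀ i k, P {ω | X i ω = k} = ENNReal.ofReal (p k)) →
      ∀ n : ℕ, 2 ≤ n →
        (∫⁻ ω, ENNReal.ofReal (⨆ s ∈ Set.Icc (0 : ℝ) 1,
            |((Kbar X n s ω : ℝ)) - (rhoBar p ((n : ℝ) ^ s) : ℝ)|) ∂P)
          ≤ ENNReal.ofReal
            (4 * ((rhoBar p n : ℝ) - (rhoBar p (y₀ * n / (Real.log n) ^ 2) : ℝ))
              + 2 * (rhoBar p n : ℝ) / Real.log n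
              + (∫ x in Set.Ioi (1 : ℝ),
                  x ^ (-2 : ℤ) * ((rhoBar p (n * x) : ℝ) - (rhoBar p n : ℝ)))
              + 2 * ⨆ s ∈ Set.Icc (0 : ℝ) 1,
                  ((rhoBar p (Real.exp 1 * (n : ℝ) ^ s) : ℝ)
                    - (rhoBar p ((n : ℝ) ^ s / Real.exp 1) : ℝ))) := by
  refine ⟨1 / 4, by norm_num, fun p hp hp1 Ω _ P _ X hX hind hlaw n hn => ?_⟩
  have hs : Summable p := by
    by_contra h
    simp [tsum_eq_zero_of_not_summable h] at hp1
  have hn2 : (2 : ℝ) ≤ n := by exact_mod_cast hn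
  have hL : 1 / 2 ≤ Real.log n := by
    linarith [Real.log_two_gt_d9, Real.log_le_log two_pos hn2]
  have ht : 0 < 1 / 4 * (n : ℝ) / Real.log n ^ 2 := by positivity
  have htL : 4 * Real.log n ^ 2 * (1 / 4 * n / Real.log n ^ 2) = n := by
    field_simp [(by linarith : Real.log n ≠ 0)]
  have htn : 1 / 4 * (n : ℝ) / Real.log n ^ 2 ≤ n := by
    nlinarith [mul_le_mul_of_nonneg_right (by nlinarith : 1 ≤ 4 * Real.log n ^ 2) ht.le]
  exact lintegral_iSup_abs_Kbar_sub_rhoBar_le hp hX hind hlaw (by omega) ht (by linarith)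
    htL.le hs htn
end
end

section
/- For every sequence $(p_k)_{k\ge1}$ of strictly positive reals with $\sum_{k\ge1}p_k=1$ and every real $t>0$, $\sum_{k\ge1} t\,p_k\,\mathbf{1}\{t p_k<1\} = \int_1^\infty x^{-2}\big(\bar\rho(tx)-\bar\rho(t)\big)\,\mathrm{d}x$. -/
/-!
Write `u = t p_k`. A box with `u < 1` contributes `u = ∫_{1/u}^∞ x⁻² dx`, so its term is the
integral over `x > 1` of `x⁻²` times the indicator of the scales `x` at which `u < 1 ≤ u x`.
Summing these indicators at a fixed `x` counts the boxes with `1/t > p_k ≥ 1/(t x)`, which is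
`ρ̄(t x) - ρ̄(t)`; the exchange of sum and integral is justified since the integrals of the
(nonnegative) summands are dominated by the summable `t p_k`.
-/

open MeasureTheory Set

noncomputable section

theorem Summable.finite_setOf_le_s1 {ι : Type*} {f : ι → ℝ} (hf : Summable f) {ε : ℝ}
    (hε : 0 < ε) : {i | ε ≤ f i}.Finite := by
  simpa [Filter.eventually_cofinite] using hf.tendsto_cofinite_zero.eventually_lt_const hε

theorem tsum_indicator_apply_eq_card_smul {ι α G : Type*} [AddCommGroup G] [TopologicalSpace G]
    [IsTopologicalAddGroup G] [T2Space G] (S : ι → Set α) (f : α → G) (x : α) :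
    ∑' i, (S i).indicator f x = Nat.card {i | x ∈ S i} • f x := by
  change ∑' i, {i | x ∈ S i}.indicator (fun _ => f x) i = _
  rw [← tsum_subtype, tsum_const]

theorem integrableOn_Ioi_zpow_neg_two {c : ℝ} (hc : 0 < c) :
    IntegrableOn (fun x : ℝ => x ^ (-2 : ℤ)) (Ioi c) :=
  (integrableOn_Ioi_rpow_of_lt (by norm_num : (-2 : ℝ) < -1) hc).congr_fun
    (fun x _ => by simp) measurableSet_Ioi

theorem integral_Ici_zpow_neg_two {c : ℝ} (hc : 0 < c) :
    ∫ x in Ici c, x ^ (-2 : ℤ) = c⁻¹ := by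
  calc ∫ x in Ici c, x ^ (-2 : ℤ) = ∫ x in Ioi c, x ^ (-2 : ℝ) := by
        rw [integral_Ici_eq_integral_Ioi]
        exact setIntegral_congr_fun measurableSet_Ioi fun x _ => by simp
    _ = c⁻¹ := by
        rw [integral_Ioi_rpow_of_lt (by norm_num) hc]
        norm_num [Real.rpow_neg_one]

def crossingScales (u : ℝ) : Set ℝ := {x | u < 1 ∧ 1 ≤ u * x}

theorem measurableSet_crossingScales (u : ℝ) : MeasurableSet (crossingScales u) := by
  unfold crossingScales
  measurability

theorem Ioi_one_inter_crossingScales {u : ℝ} (hu₀ : 0 < u) (hu₁ : u < 1) :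
    Ioi 1 ∩ crossingScales u = Ici u⁻¹ := by
  ext x
  simp only [crossingScales, mem_inter_iff, mem_Ioi, mem_ofPred_eq, mem_Ici, hu₁, true_and,
    inv_le_iff_one_le_mul₀' hu₀]
  exact ⟨And.right, fun hx => ⟨by nlinarith, hx⟩⟩

theorem crossingScales_of_one_le {u : ℝ} (hu : 1 ≤ u) : crossingScales u = ∅ := by
  ext x
  simp [crossingScales, hu]

theorem setIntegral_Ioi_one_indicator_crossingScales {u : ℝ} (hu : 0 < u) :
    ∫ x in Ioi 1, (crossingScales u).indicator (fun x => x ^ (-2 : ℤ)) x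
      = if u < 1 then u else 0 := by
  rw [setIntegral_indicator (measurableSet_crossingScales u)]
  split_ifs with hu₁
  · rw [Ioi_one_inter_crossingScales hu hu₁, integral_Ici_zpow_neg_two (inv_pos.2 hu), inv_inv]
  · simp [crossingScales_of_one_le (not_lt.1 hu₁)]

theorem rhoBar_mul_sub_rhoBar {p : ℕ → ℝ} (hp : Summable p) {t x : ℝ} (ht : 0 < t)
    (hx : 1 ≤ x) :
    (rhoBar p (t * x) : ℝ) - rhoBar p t = Nat.card {k | x ∈ crossingScales (t * p k)} := by
  have htx : 0 < t * x := mul_pos ht (zero_lt_one.trans_le hx)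
  have hB : {k | p k ≥ 1 / t} ⊆ {k | p k ≥ 1 / (t * x)} := fun k hk =>
    le_trans (one_div_le_one_div_of_le ht (le_mul_of_one_le_right ht.le hx)) hk
  have hdiff :
      {k | x ∈ crossingScales (t * p k)} = {k | p k ≥ 1 / (t * x)} \ {k | p k ≥ 1 / t} := by
    ext k
    simp only [crossingScales, mem_ofPred_eq, mem_sdiff, ge_iff_le, not_le,
      div_le_iff₀ htx, lt_div_iff₀ ht]
    constructor <;> rintro ⟨h₁, h₂⟩ <;> constructor <;> linarith
  have hcard := Set.ncard_sdiff_add_ncard_of_subset hB (hp.finite_setOf_le_s1 (one_div_pos.2 htx))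
  simp only [rhoBar, hdiff, Nat.card_coe_set_eq, ← hcard]
  push_cast
  ring

theorem tsum_small_probabilities_eq_integral
    (p : ℕ → ℝ) (hp : ∀ k, 0 < p k) (hsum : (∑' k, p k) = 1) (t : ℝ) (ht : 0 < t) :
    (∑' k, if t * p k < 1 then t * p k else 0)
      = ∫ x in Set.Ioi (1 : ℝ), x ^ (-2 : ℤ) * ((rhoBar p (t * x) : ℝ) - (rhoBar p t : ℝ)) := by
  have hs : Summable p := by
    by_contra h
    simp [tsum_eq_zero_of_not_summable h] at hsum
  set F : ℕ → ℝ → ℝ :=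
    fun k => (crossingScales (t * p k)).indicator fun x => x ^ (-2 : ℤ)
  have hF : ∀ k, ∫ x in Ioi 1, F k x = if t * p k < 1 then t * p k else 0 := fun k =>
    setIntegral_Ioi_one_indicator_crossingScales (mul_pos ht (hp k))
  have hF_int : ∀ k, IntegrableOn (F k) (Ioi 1) := fun k =>
    (integrableOn_Ioi_zpow_neg_two one_pos).indicator (measurableSet_crossingScales _)
  have hF_norm : ∀ k, ∫ x in Ioi 1, ‖F k x‖ = ∫ x in Ioi 1, F k x := fun k =>
    integral_congr_ae (ae_of_all _ fun x => Real.norm_of_nonneg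
      (indicator_nonneg (fun x _ => (by decide : Even (-2 : ℤ)).zpow_nonneg x) x))
  have hF_summable : Summable fun k => ∫ x in Ioi 1, ‖F k x‖ := by
    simp only [hF_norm, hF]
    refine (hs.mul_left t).of_nonneg_of_le (fun k => ?_) (fun k => ?_) <;>
      split_ifs <;> linarith [mul_pos ht (hp k)]
  calc (∑' k, if t * p k < 1 then t * p k else 0)
      = ∑' k, ∫ x in Ioi 1, F k x := by simp only [hF]
    _ = ∫ x in Ioi 1, ∑' k, F k x := integral_tsum_of_summable_integral_norm hF_int hF_summable
    _ = _ := setIntegral_congr_fun measurableSet_Ioi fun x hx => by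
        rw [tsum_indicator_apply_eq_card_smul, rhoBar_mul_sub_rhoBar hs ht (le_of_lt hx),
          nsmul_eq_mul, mul_comm]
end
end

section
/- Let $V:\mathbb{R}\to[0,\infty)$ be nondecreasing and right-continuous with $V(t)=0$ for $t<0$, and suppose $b_0+b_1 t^{\omega-\varepsilon_1}\le V(t)-c\,t^{\omega}\le a_0+a_1 t^{\omega-\varepsilon_2}$ for all $t\ge 0$, where $c,\omega,a_0,a_1>0$, $0<\varepsilon_1,\varepsilon_2\le\omega$, and $b_0,b_1\in\mathbb{R}$. Define $V_1:=V$ and recursively $V_j(t):=\int_{[0,t]}V_{j-1}(t-y)\,\mathrm{d}V(y)$ for $t\ge0$ and $j\ge 2$ (Lebesgue–Stieltjes integral with respect to $V$). Set $c_j:=(c\,\Gamma(\omega+1))^j/\Gamma(\omega j+1)$. Then for every $j\ge 1$ there exist constants $a_{0,j},a_{1,j}>0$ and $b_{0,j},b_{1,j}\in\mathbb{R}$ such that $b_{0,j}+b_{1,j}t^{\omega j-\varepsilon_1}\le V_j(t)-c_j t^{\omega j}\le a_{0,j}+a_{1,j}t^{\omega j-\varepsilon_2}$ for all $t\ge 0$.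 -/
/-!
Write `J_β(t) = ∫_{[0,t]} (t - y) ^ β dV(y)`. The layer cake formula turns this into
`∫₀ᵗ V(t - x) d(x ^ β)`, so inserting `V(u) = c u ^ ω + O(1 + u ^ (ω - ε))` and the Beta
integral `∫₀ᵗ β x ^ (β - 1) (t - x) ^ ω dx = Γ(β + 1) Γ(ω + 1) / Γ(β + ω + 1) t ^ (β + ω)` gives
`J_β(t) = c B t ^ (β + ω) + O(1 + t ^ (β + ω - ε))`. If
`V_j(s) = c_j s ^ (ωj) + O(1 + s ^ (ωj - ε))`, integrating against `dV` gives
`V_{j+1}(t) = c_j J_{ωj}(t) + O((1 + t ^ (ωj - ε)) V(t))`, and the Gamma factors telescope to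
`c_{j+1}`. Errors from below and from above are bounded separately, since their exponents differ.
-/

open MeasureTheory Set

noncomputable section

lemma rpow_le_one_add_rpow {t p q : ℝ} (ht : 0 ≤ t) (hp : 0 ≤ p) (hpq : p ≤ q) :
    t ^ p ≤ 1 + t ^ q := by
  rcases le_or_gt t 1 with h | h
  · linarith [Real.rpow_le_one ht h hp, Real.rpow_nonneg ht q]
  · linarith [Real.rpow_le_rpow_of_exponent_le h.le hpq]

def IsRpowBoundedAbove (f : ℝ → ℝ) (p : ℝ) : Prop :=
  ∃ M, 0 ≤ M ∧ ∀ t, 0 ≤ t → f t ≤ M * (1 + t ^ p)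

lemma isRpowBoundedAbove_const_add_mul_rpow (a b p : ℝ) :
    IsRpowBoundedAbove (fun t => a + b * t ^ p) p := by
  refine ⟨|a| + |b|, by positivity, fun t ht => ?_⟩
  have := Real.rpow_nonneg ht p
  nlinarith [le_abs_self a, le_abs_self b, abs_nonneg a, abs_nonneg b]

namespace IsRpowBoundedAbove

variable {f g : ℝ → ℝ} {p q : ℝ}

lemma of_le (hg : IsRpowBoundedAbove g p) (h : ∀ t, 0 ≤ t → f t ≤ g t) :
    IsRpowBoundedAbove f p := by
  obtain ⟨M, hM, hg⟩ := hg
  exact ⟨M, hM, fun t ht => (h t ht).trans (hg t ht)⟩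

lemma add (hf : IsRpowBoundedAbove f p) (hg : IsRpowBoundedAbove g p) :
    IsRpowBoundedAbove (fun t => f t + g t) p := by
  obtain ⟨M, hM, hf⟩ := hf
  obtain ⟨N, hN, hg⟩ := hg
  exact ⟨M + N, add_nonneg hM hN, fun t ht => add_mul M N _ ▸ add_le_add (hf t ht) (hg t ht)⟩

lemma const_mul (hf : IsRpowBoundedAbove f p) {a : ℝ} (ha : 0 ≤ a) :
    IsRpowBoundedAbove (fun t => a * f t) p := by
  obtain ⟨M, hM, hf⟩ := hf
  exact ⟨a * M, mul_nonneg ha hM, fun t ht =>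
    mul_assoc a M _ ▸ mul_le_mul_of_nonneg_left (hf t ht) ha⟩

lemma mono (hf : IsRpowBoundedAbove f p) (hp : 0 ≤ p) (hpq : p ≤ q) :
    IsRpowBoundedAbove f q := by
  obtain ⟨M, hM, hf⟩ := hf
  refine ⟨2 * M, by positivity, fun t ht => (hf t ht).trans ?_⟩
  nlinarith [rpow_le_one_add_rpow ht hp hpq, Real.rpow_nonneg ht q]

lemma one_add_rpow_mul (hf : IsRpowBoundedAbove f p) (hp : 0 ≤ p) (hq : 0 ≤ q) :
    IsRpowBoundedAbove (fun t => (1 + t ^ q) * f t) (p + q) := by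
  obtain ⟨M, hM, hf⟩ := hf
  refine ⟨3 * M, by positivity, fun t ht => ?_⟩
  have hprod : (1 + t ^ q) * (1 + t ^ p) ≤ 3 * (1 + t ^ (p + q)) := by
    have h₁ := rpow_le_one_add_rpow ht hp (le_add_of_nonneg_right hq)
    have h₂ := rpow_le_one_add_rpow ht hq (le_add_of_nonneg_left hp)
    rw [Real.rpow_add_of_nonneg ht hp hq] at h₁ h₂ ⊢
    nlinarith
  calc (1 + t ^ q) * f t ≤ (1 + t ^ q) * (M * (1 + t ^ p)) :=
        mul_le_mul_of_nonneg_left (hf t ht) (by positivity)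
    _ ≤ 3 * M * (1 + t ^ (p + q)) := by nlinarith

end IsRpowBoundedAbove

theorem integral_rpow_mul_sub_rpow {p q t : ℝ} (hp : 0 < p) (hq : 0 < q) (ht : 0 < t) :
    ∫ x in 0..t, x ^ (p - 1) * (t - x) ^ (q - 1) =
      Real.Gamma p * Real.Gamma q / Real.Gamma (p + q) * t ^ (p + q - 1) := by
  have hΓ : Complex.Gamma (p + q) ≠ 0 :=
    Complex.Gamma_ne_zero_of_re_pos (by simp only [Complex.add_re, Complex.ofReal_re]; linarith)
  have hbeta :
      Complex.betaIntegral p q = Complex.Gamma p * Complex.Gamma q / Complex.Gamma (p + q) := by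
    rw [Complex.Gamma_mul_Gamma_eq_betaIntegral (by simpa) (by simpa), mul_div_cancel_left₀ _ hΓ]
  apply Complex.ofReal_injective
  rw [← intervalIntegral.integral_ofReal]
  have hcongr : ∫ x in 0..t, ((x ^ (p - 1) * (t - x) ^ (q - 1) : ℝ) : ℂ) =
      ∫ x in 0..t, (x : ℂ) ^ ((p : ℂ) - 1) * ((t : ℂ) - x) ^ ((q : ℂ) - 1) := by
    refine intervalIntegral.integral_congr fun x hx => ?_
    rw [uIcc_of_le ht.le] at hx
    rw [Complex.ofReal_mul, Complex.ofReal_cpow hx.1, Complex.ofReal_cpow (sub_nonneg.2 hx.2)]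
    push_cast
    rfl
  rw [hcongr, Complex.betaIntegral_scaled _ _ ht, hbeta]
  push_cast
  rw [Complex.ofReal_cpow ht.le, ← Complex.Gamma_ofReal, ← Complex.Gamma_ofReal,
    ← Complex.Gamma_ofReal]
  push_cast
  ring

/-- `∫₀ᵗ g (t - x) d(x ^ β)`: the Stieltjes convolution of `g` with `x ↦ x ^ β`. -/
def rpowConv (β : ℝ) (g : ℝ → ℝ) (t : ℝ) : ℝ :=
  ∫ x in 0..t, β * x ^ (β - 1) * g (t - x)

section rpowConv

variable {β t : ℝ} {g : ℝ → ℝ}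

lemma intervalIntegrable_rpowConv_integrand (hβ : 0 < β) (ht : 0 ≤ t)
    (hg : MonotoneOn g (Icc 0 t)) :
    IntervalIntegrable (fun x => β * x ^ (β - 1) * g (t - x)) volume 0 t := by
  have hmem : ∀ x ∈ Icc 0 t, t - x ∈ Icc 0 t := fun x hx => ⟨by linarith [hx.2], by linarith [hx.1]⟩
  have hanti : AntitoneOn (fun x => g (t - x)) (Icc 0 t) := fun x hx y hy hxy =>
    hg (hmem y hy) (hmem x hx) (by linarith)
  have hkernel : IntegrableOn (fun x => β * x ^ (β - 1)) (Icc 0 t) :=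
    (intervalIntegrable_iff_integrableOn_Icc_of_le ht).1
      ((intervalIntegral.intervalIntegrable_rpow' (by linarith)).const_mul β)
  refine (intervalIntegrable_iff_integrableOn_Icc_of_le ht).2
    (hkernel.mul_bdd (c := max |g 0| |g t|)
      (hanti.integrableOn_isCompact isCompact_Icc).aestronglyMeasurable
      ((ae_restrict_iff' measurableSet_Icc).2 (ae_of_all _ fun x hx => ?_)))
  have hx' := hmem x hx
  exact abs_le_max_abs_abs (hg ⟨le_rfl, ht⟩ hx' hx'.1) (hg hx' ⟨ht, le_rfl⟩ hx'.2)

lemma rpowConv_const_mul (a : ℝ) : rpowConv β (fun u => a * g u) t = a * rpowConv β g t := by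
  simp only [rpowConv, ← intervalIntegral.integral_const_mul]
  congr 1 with x
  ring

lemma rpowConv_sub {f : ℝ → ℝ}
    (hf : IntervalIntegrable (fun x => β * x ^ (β - 1) * f (t - x)) volume 0 t)
    (hg : IntervalIntegrable (fun x => β * x ^ (β - 1) * g (t - x)) volume 0 t) :
    rpowConv β (fun u => f u - g u) t = rpowConv β f t - rpowConv β g t := by
  simp only [rpowConv, ← intervalIntegral.integral_sub hf hg, mul_sub]

lemma rpowConv_rpow {r : ℝ} (hβ : 0 < β) (hr : 0 ≤ r) (ht : 0 ≤ t) :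
    rpowConv β (· ^ r) t =
      Real.Gamma (β + 1) * Real.Gamma (r + 1) / Real.Gamma (β + r + 1) * t ^ (β + r) := by
  rcases ht.eq_or_lt with rfl | ht
  · simp [rpowConv, Real.zero_rpow (by positivity : β + r ≠ 0)]
  have hbeta := integral_rpow_mul_sub_rpow hβ (by linarith : 0 < r + 1) ht
  simp only [add_sub_cancel_right, ← add_assoc] at hbeta
  rw [rpowConv, show (fun x => β * x ^ (β - 1) * (t - x) ^ r) =
      fun x => β * (x ^ (β - 1) * (t - x) ^ r) by ext; ring,
    intervalIntegral.integral_const_mul, hbeta, Real.Gamma_add_one hβ.ne']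
  ring

lemma rpowConv_const (hβ : 0 < β) (ht : 0 ≤ t) (a : ℝ) : rpowConv β (fun _ => a) t = a * t ^ β := by
  have h := rpowConv_rpow (r := 0) hβ le_rfl ht
  simp only [Real.rpow_zero, zero_add, add_zero, Real.Gamma_one, mul_one] at h
  rw [div_self (Real.Gamma_pos_of_pos (by linarith)).ne', one_mul] at h
  rw [← h, ← rpowConv_const_mul, mul_one]

/-- A non-integrable integrand gives `rpowConv` the junk value `0`, which obeys the bound too. -/
lemma IsRpowBoundedAbove.rpowConv {p : ℝ} (hg : IsRpowBoundedAbove g p) (hβ : 0 < β) (hp : 0 ≤ p) :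
    IsRpowBoundedAbove (rpowConv β g) (β + p) := by
  obtain ⟨M, hM, hg⟩ := hg
  refine ((isRpowBoundedAbove_const_add_mul_rpow 0 M β).one_add_rpow_mul hβ.le hp).of_le
    fun t ht => ?_
  by_cases hint : IntervalIntegrable (fun x => β * x ^ (β - 1) * g (t - x)) volume 0 t
  · have hbound : ∀ x ∈ Icc 0 t,
        β * x ^ (β - 1) * g (t - x) ≤ β * x ^ (β - 1) * (M * (1 + t ^ p)) := by
      intro x hx
      have htx : t - x ≤ t := by linarith [hx.1]
      have hpow : (t - x) ^ p ≤ t ^ p := Real.rpow_le_rpow (by linarith [hx.2]) htx hp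
      refine mul_le_mul_of_nonneg_left ((hg _ (by linarith [hx.2])).trans ?_)
        (mul_nonneg hβ.le (Real.rpow_nonneg hx.1 _))
      gcongr
    calc _root_.rpowConv β g t ≤ _root_.rpowConv β (fun _ => M * (1 + t ^ p)) t :=
          intervalIntegral.integral_mono_on ht hint
            (intervalIntegrable_rpowConv_integrand hβ ht monotoneOn_const) hbound
      _ = (1 + t ^ p) * (0 + M * t ^ β) := by rw [rpowConv_const hβ ht]; ring
  · rw [_root_.rpowConv, intervalIntegral.integral_undef hint]
    have := Real.rpow_nonneg ht β
    positivity

end rpowConv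

namespace StieltjesFunction

variable {V : StieltjesFunction ℝ} {W : ℝ → ℝ} {t : ℝ}

def conv (V : StieltjesFunction ℝ) (W : ℝ → ℝ) (t : ℝ) : ℝ :=
  ∫ y in Icc 0 t, W (t - y) ∂V.measure

lemma nonneg_of_forall_neg_eq_zero (hV0 : ∀ t < 0, V t = 0) (t : ℝ) : 0 ≤ V t := by
  rcases lt_or_ge t 0 with h | h
  · rw [hV0 t h]
  · rw [← hV0 (-1) (by norm_num)]
    exact V.mono (by linarith)

lemma measure_Icc_zero (hV0 : ∀ t < 0, V t = 0) (t : ℝ) :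
    V.measure (Icc 0 t) = ENNReal.ofReal (V t) := by
  have hleft : Function.leftLim V 0 = 0 := by
    refine leftLim_eq_of_tendsto (tendsto_const_nhds.congr' ?_)
    filter_upwards [self_mem_nhdsWithin] with s hs using (hV0 s hs).symm
  rw [measure_Icc, hleft, sub_zero]

lemma measureReal_Icc_zero (hV0 : ∀ t < 0, V t = 0) (t : ℝ) :
    V.measure.real (Icc 0 t) = V t := by
  rw [measureReal_def, measure_Icc_zero hV0,
    ENNReal.toReal_ofReal (nonneg_of_forall_neg_eq_zero hV0 t)]

lemma integrableOn_comp_sub (hW : MonotoneOn W (Ici 0)) (t : ℝ) :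
    IntegrableOn (fun y => W (t - y)) (Icc 0 t) V.measure :=
  AntitoneOn.integrableOn_isCompact isCompact_Icc fun x hx y hy hxy =>
    hW (show 0 ≤ t - y by linarith [hy.2]) (show 0 ≤ t - x by linarith [hx.2]) (by linarith)

lemma conv_nonneg (hW : ∀ u, 0 ≤ u → 0 ≤ W u) (t : ℝ) : 0 ≤ V.conv W t :=
  setIntegral_nonneg measurableSet_Icc fun y hy => hW _ (by linarith [hy.2])

lemma conv_monotoneOn (hW : MonotoneOn W (Ici 0)) (hW0 : ∀ u, 0 ≤ u → 0 ≤ W u) :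
    MonotoneOn (V.conv W) (Ici 0) := by
  intro s hs t ht hst
  calc V.conv W s ≤ ∫ y in Icc 0 s, W (t - y) ∂V.measure :=
        setIntegral_mono_on (integrableOn_comp_sub hW s)
          ((integrableOn_comp_sub hW t).mono_set (Icc_subset_Icc_right hst)) measurableSet_Icc
          fun y hy => hW (show 0 ≤ s - y by linarith [hy.2]) (show 0 ≤ t - y by linarith [hy.2])
            (by linarith)
    _ ≤ V.conv W t :=
        setIntegral_mono_set (integrableOn_comp_sub hW t)
          ((ae_restrict_iff' measurableSet_Icc).2
            (ae_of_all _ fun y hy => hW0 _ (by linarith [hy.2])))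
          (Icc_subset_Icc_right hst).eventuallyLE

lemma conv_const_mul (a : ℝ) : V.conv (fun u => a * W u) t = a * V.conv W t :=
  integral_const_mul a _

lemma conv_le (hV0 : ∀ t < 0, V t = 0) (hW : IntegrableOn (fun y => W (t - y)) (Icc 0 t) V.measure)
    {C α M q : ℝ} (hα : 0 ≤ α) (hM : 0 ≤ M) (hq : 0 ≤ q)
    (hbound : ∀ u, 0 ≤ u → u ≤ t → W u ≤ C * u ^ α + M * (1 + u ^ q)) :
    V.conv W t ≤ C * V.conv (· ^ α) t + (1 + t ^ q) * (M * V t) := by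
  have hpow : IntegrableOn (fun y => C * (t - y) ^ α) (Icc 0 t) V.measure :=
    (((continuous_const.sub continuous_id).rpow_const fun _ => Or.inr hα).const_mul
      C).integrableOn_Icc
  calc V.conv W t ≤ ∫ y in Icc 0 t, (C * (t - y) ^ α + M * (1 + t ^ q)) ∂V.measure := by
        refine setIntegral_mono_on hW (hpow.add continuous_const.integrableOn_Icc) measurableSet_Icc
          fun y hy => (hbound _ (by linarith [hy.2]) (by linarith [hy.1])).trans ?_
        have : (t - y) ^ q ≤ t ^ q := Real.rpow_le_rpow (by linarith [hy.2]) (by linarith [hy.1]) hq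
        gcongr
    _ = C * V.conv (· ^ α) t + (1 + t ^ q) * (M * V t) := by
        rw [integral_add hpow continuous_const.integrableOn_Icc, integral_const_mul,
          setIntegral_const, measureReal_Icc_zero hV0, smul_eq_mul, conv]
        ring

lemma measure_restrict_Icc_le_sub (hV0 : ∀ t < 0, V t = 0) {x : ℝ} (hx : 0 < x) :
    V.measure.restrict (Icc 0 t) {y | x ≤ t - y} = ENNReal.ofReal (V (t - x)) := by
  have hset : {y | x ≤ t - y} ∩ Icc 0 t = Icc 0 (t - x) := by
    ext y
    simp only [mem_inter_iff, mem_Icc, mem_ofPred_eq]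
    constructor
    · rintro ⟨h₁, h₂, -⟩
      exact ⟨h₂, by linarith⟩
    · rintro ⟨h₁, h₂⟩
      exact ⟨by linarith, h₁, by linarith⟩
  rw [Measure.restrict_apply' measurableSet_Icc, hset, measure_Icc_zero hV0]

lemma lintegral_rpow_sub_eq (hV0 : ∀ t < 0, V t = 0) {β : ℝ} (hβ : 0 < β) (ht : 0 ≤ t) :
    ∫⁻ y in Icc 0 t, ENNReal.ofReal ((t - y) ^ β) ∂V.measure =
      ∫⁻ x in Ioc 0 t, ENNReal.ofReal (β * x ^ (β - 1) * V (t - x)) := by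
  have hkernel : ∀ x, 0 ≤ x → 0 ≤ β * x ^ (β - 1) := fun x hx =>
    mul_nonneg hβ.le (Real.rpow_nonneg hx _)
  have hprimitive : ∀ s, ∫ x in 0..s, β * x ^ (β - 1) = s ^ β := fun s => by
    rw [intervalIntegral.integral_const_mul, integral_rpow (Or.inl (by linarith)),
      sub_add_cancel, Real.zero_rpow hβ.ne', sub_zero, mul_div_cancel₀ _ hβ.ne']
  have hlayer := lintegral_comp_eq_lintegral_meas_le_mul (V.measure.restrict (Icc 0 t))
    (f := fun y => t - y) (g := fun x => β * x ^ (β - 1))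
    ((ae_restrict_iff' measurableSet_Icc).2 (ae_of_all _ fun y hy => sub_nonneg.2 hy.2))
    (by fun_prop) (fun s _ => (intervalIntegral.intervalIntegrable_rpow' (by linarith)).const_mul β)
    ((ae_restrict_iff' _root_.measurableSet_Ioi).2 (ae_of_all _ fun x hx => hkernel x hx.le))
  have hbeyond : ∫⁻ x in Ioi t, ENNReal.ofReal (V (t - x)) *
      ENNReal.ofReal (β * x ^ (β - 1)) = 0 := by
    rw [← lintegral_zero]
    refine setLIntegral_congr_fun _root_.measurableSet_Ioi fun x hx => ?_
    rw [hV0 _ (sub_neg.2 hx), ENNReal.ofReal_zero, zero_mul]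
  simp only [hprimitive] at hlayer
  rw [hlayer, setLIntegral_congr_fun _root_.measurableSet_Ioi fun x hx => by
      rw [measure_restrict_Icc_le_sub hV0 hx],
    ← Ioc_union_Ioi_eq_Ioi ht, lintegral_union _root_.measurableSet_Ioi Ioc_disjoint_Ioi_same,
    hbeyond, add_zero]
  exact setLIntegral_congr_fun _root_.measurableSet_Ioc fun x hx => by
    rw [ENNReal.ofReal_mul (hkernel x hx.1.le), mul_comm]

/-- Commutativity of the Stieltjes convolution: `∫ (t - y) ^ β dV(y) = ∫ V (t - x) d(x ^ β)`. -/
theorem conv_rpow_eq_rpowConv (hV0 : ∀ t < 0, V t = 0) {β : ℝ} (hβ : 0 < β) (ht : 0 ≤ t) :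
    V.conv (· ^ β) t = rpowConv β V t := by
  have hVm : Measurable fun x => V (t - x) := V.mono.measurable.comp (by fun_prop)
  rw [conv, rpowConv, intervalIntegral.integral_of_le ht,
    integral_eq_lintegral_of_nonneg_ae
      ((ae_restrict_iff' measurableSet_Icc).2 (ae_of_all _ fun y hy =>
        Real.rpow_nonneg (sub_nonneg.2 hy.2) β))
      (by fun_prop : Measurable fun y : ℝ => (t - y) ^ β).aestronglyMeasurable,
    integral_eq_lintegral_of_nonneg_ae
      ((ae_restrict_iff' _root_.measurableSet_Ioc).2 (ae_of_all _ fun x hx =>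
        mul_nonneg (mul_nonneg hβ.le (Real.rpow_nonneg hx.1.le _))
          (nonneg_of_forall_neg_eq_zero hV0 _)))
      ((by fun_prop : Measurable fun x : ℝ => β * x ^ (β - 1)).mul hVm).aestronglyMeasurable,
    lintegral_rpow_sub_eq hV0 hβ ht]

/-- The multiplier `s` lets one lemma give both the upper (`s = 1`) and the lower (`s = -1`)
bound. -/
theorem isRpowBoundedAbove_mul_conv_sub {c ω C α ε s : ℝ} (hV0 : ∀ t < 0, V t = 0)
    (hVgrowth : IsRpowBoundedAbove V ω)
    (hV : IsRpowBoundedAbove (fun u => s * (V u - c * u ^ ω)) (ω - ε))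
    (hWmono : MonotoneOn W (Ici 0))
    (hW : IsRpowBoundedAbove (fun u => s * (W u - C * u ^ α)) (α - ε))
    (hc : 0 ≤ c) (hC : 0 ≤ C) (hω : 0 ≤ ω) (hα : 0 < α) (hεω : ε ≤ ω) (hεα : ε ≤ α) :
    IsRpowBoundedAbove (fun t => s * (V.conv W t - C * (c * (Real.Gamma (α + 1) *
      Real.Gamma (ω + 1) / Real.Gamma (α + ω + 1))) * t ^ (α + ω))) (α + ω - ε) := by
  obtain ⟨M, hM, hWM⟩ := hW
  have hmain := (hV.rpowConv hα (sub_nonneg.2 hεω)).const_mul hC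
  have hrest := (hVgrowth.const_mul hM).one_add_rpow_mul hω (sub_nonneg.2 hεα)
  rw [show α + (ω - ε) = α + ω - ε by ring] at hmain
  rw [show ω + (α - ε) = α + ω - ε by ring] at hrest
  refine (hmain.add hrest).of_le fun t ht => ?_
  have hconv := V.conv_le (W := fun u => s * W u) (C := s * C) hV0
    ((integrableOn_comp_sub hWmono t).const_mul s) hα.le hM (sub_nonneg.2 hεα)
    fun u hu _ => by linear_combination hWM u hu
  have hVint := intervalIntegrable_rpowConv_integrand hα ht (V.mono.monotoneOn (Icc 0 t))
  have hpowint := intervalIntegrable_rpowConv_integrand (g := fun u => c * u ^ ω) hα ht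
    fun x hx y _ hxy => mul_le_mul_of_nonneg_left (Real.rpow_le_rpow hx.1 hxy hω) hc
  rw [V.conv_const_mul, V.conv_rpow_eq_rpowConv hV0 hα ht] at hconv
  rw [rpowConv_const_mul, rpowConv_sub hVint hpowint, rpowConv_const_mul,
    rpowConv_rpow hα hω ht]
  linear_combination hconv

end StieltjesFunction

structure HasPowerBounds (W : ℝ → ℝ) (C α ε₁ ε₂ : ℝ) : Prop where
  monotoneOn : MonotoneOn W (Ici 0)
  nonneg : ∀ t, 0 ≤ t → 0 ≤ W t
  lower : IsRpowBoundedAbove (fun t => C * t ^ α - W t) (α - ε₁)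
  upper : IsRpowBoundedAbove (fun t => W t - C * t ^ α) (α - ε₂)

namespace HasPowerBounds

variable {W : ℝ → ℝ} {C α ε₁ ε₂ : ℝ}

lemma congr (h : HasPowerBounds W C α ε₁ ε₂) {W' : ℝ → ℝ} (hW : ∀ t, 0 ≤ t → W t = W' t) :
    HasPowerBounds W' C α ε₁ ε₂ where
  monotoneOn := h.monotoneOn.congr hW
  nonneg t ht := hW t ht ▸ h.nonneg t ht
  lower := h.lower.of_le fun t ht => by rw [hW t ht]
  upper := h.upper.of_le fun t ht => by rw [hW t ht]

lemma isRpowBoundedAbove (h : HasPowerBounds W C α ε₁ ε₂) (hC : 0 ≤ C) (hε₂ : 0 ≤ ε₂)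
    (hε₂α : ε₂ ≤ α) : IsRpowBoundedAbove W α :=
  ((h.upper.mono (sub_nonneg.2 hε₂α) (by linarith)).add
    ((isRpowBoundedAbove_const_add_mul_rpow 0 1 α).const_mul hC)).of_le
    fun t _ => le_of_eq (by ring)

theorem conv {V : StieltjesFunction ℝ} {c ω : ℝ} (hW : HasPowerBounds W C α ε₁ ε₂)
    (hV : HasPowerBounds V c ω ε₁ ε₂) (hV0 : ∀ t < 0, V t = 0) (hc : 0 ≤ c) (hC : 0 ≤ C)
    (hα : 0 < α) (hωα : ω ≤ α) (hε₁ : ε₁ ≤ ω) (hε₂ : 0 ≤ ε₂) (hε₂ω : ε₂ ≤ ω) :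
    HasPowerBounds (V.conv W)
      (C * (c * (Real.Gamma (α + 1) * Real.Gamma (ω + 1) / Real.Gamma (α + ω + 1)))) (α + ω)
      ε₁ ε₂ := by
  have hVgrowth := hV.isRpowBoundedAbove hc hε₂ hε₂ω
  have hω : 0 ≤ ω := hε₂.trans hε₂ω
  refine ⟨V.conv_monotoneOn hW.monotoneOn hW.nonneg, fun t _ => V.conv_nonneg hW.nonneg t, ?_, ?_⟩
  · refine (V.isRpowBoundedAbove_mul_conv_sub (s := -1) hV0 hVgrowth
      (hV.lower.of_le fun u _ => le_of_eq (by ring)) hW.monotoneOn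
      (hW.lower.of_le fun u _ => le_of_eq (by ring)) hc hC hω hα hε₁ (hε₁.trans hωα)).of_le
      fun t _ => le_of_eq (by ring)
  · refine (V.isRpowBoundedAbove_mul_conv_sub (s := 1) hV0 hVgrowth
      (hV.upper.of_le fun u _ => le_of_eq (by ring)) hW.monotoneOn
      (hW.upper.of_le fun u _ => le_of_eq (by ring)) hc hC hω hα hε₂ω (hε₂ω.trans hωα)).of_le
      fun t _ => le_of_eq (by ring)

lemma exists_bounds (h : HasPowerBounds W C α ε₁ ε₂) :
    ∃ a₀ a₁ b₀ b₁ : ℝ, 0 < a₀ ∧ 0 < a₁ ∧ ∀ t, 0 ≤ t →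
      b₀ + b₁ * t ^ (α - ε₁) ≤ W t - C * t ^ α ∧ W t - C * t ^ α ≤ a₀ + a₁ * t ^ (α - ε₂) := by
  obtain ⟨-, -, ⟨M₁, -, hlower⟩, ⟨M₂, hM₂, hupper⟩⟩ := h
  refine ⟨M₂ + 1, M₂ + 1, -M₁, -M₁, by linarith, by linarith, fun t ht => ⟨?_, ?_⟩⟩
  · linarith [hlower t ht]
  · nlinarith [hupper t ht, Real.rpow_nonneg ht (α - ε₂)]

end HasPowerBounds

lemma StieltjesFunction.hasPowerBounds {V : StieltjesFunction ℝ} {c ω ε₁ ε₂ a₀ a₁ b₀ b₁ : ℝ}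
    (hV0 : ∀ t < 0, V t = 0) (hlow : ∀ t ≥ 0, b₀ + b₁ * t ^ (ω - ε₁) ≤ V t - c * t ^ ω)
    (hup : ∀ t ≥ 0, V t - c * t ^ ω ≤ a₀ + a₁ * t ^ (ω - ε₂)) :
    HasPowerBounds V c ω ε₁ ε₂ where
  monotoneOn := V.mono.monotoneOn _
  nonneg t _ := V.nonneg_of_forall_neg_eq_zero hV0 t
  lower := (isRpowBoundedAbove_const_add_mul_rpow (-b₀) (-b₁) _).of_le fun t ht => by
    linarith [hlow t ht]
  upper := (isRpowBoundedAbove_const_add_mul_rpow a₀ a₁ _).of_le hup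

lemma pow_div_Gamma_succ (c : ℝ) {ω : ℝ} (hω : 0 ≤ ω) (n : ℕ) :
    (c * Real.Gamma (ω + 1)) ^ (n + 1) / Real.Gamma (ω * (n + 1 : ℕ) + 1) =
      (c * Real.Gamma (ω + 1)) ^ n / Real.Gamma (ω * n + 1) *
        (c * (Real.Gamma (ω * n + 1) * Real.Gamma (ω + 1) / Real.Gamma (ω * n + ω + 1))) := by
  have hΓ : Real.Gamma (ω * n + 1) ≠ 0 := (Real.Gamma_pos_of_pos (by positivity)).ne'
  rw [Nat.cast_succ, mul_add_one]
  field_simp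
  ring

theorem power_bounds_for_convolution_powers_general
    (V : StieltjesFunction ℝ) (c ω a0 a1 ε1 ε2 b0 b1 : ℝ)
    (hc : 0 < c) (hω : 0 < ω)
    (hε1' : ε1 ≤ ω) (hε2 : 0 < ε2) (hε2' : ε2 ≤ ω)
    (hV0 : ∀ t < 0, V t = 0)
    (hVlow : ∀ t ≥ 0, b0 + b1 * t ^ (ω - ε1) ≤ V t - c * t ^ ω)
    (hVup : ∀ t ≥ 0, V t - c * t ^ ω ≤ a0 + a1 * t ^ (ω - ε2))
    (Vseq : ℕ → ℝ → ℝ)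
    (hV1 : ∀ t, Vseq 1 t = V t)
    (hrec : ∀ j : ℕ, 2 ≤ j → ∀ t, 0 ≤ t →
        Vseq j t = ∫ y in Set.Icc (0 : ℝ) t, Vseq (j - 1) (t - y) ∂V.measure) :
    ∀ j : ℕ, 1 ≤ j → ∃ a0j a1j b0j b1j : ℝ, 0 < a0j ∧ 0 < a1j ∧
      ∀ t, 0 ≤ t →
        b0j + b1j * t ^ (ω * (j : ℝ) - ε1)
            ≤ Vseq j t - ((c * Real.Gamma (ω + 1)) ^ j / Real.Gamma (ω * (j : ℝ) + 1)) * t ^ (ω * (j : ℝ))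
          ∧ Vseq j t - ((c * Real.Gamma (ω + 1)) ^ j / Real.Gamma (ω * (j : ℝ) + 1)) * t ^ (ω * (j : ℝ))
            ≤ a0j + a1j * t ^ (ω * (j : ℝ) - ε2) := by
  have hV := V.hasPowerBounds (ε₁ := ε1) (ε₂ := ε2) hV0 hVlow hVup
  have key : ∀ j, 1 ≤ j → HasPowerBounds (Vseq j)
      ((c * Real.Gamma (ω + 1)) ^ j / Real.Gamma (ω * j + 1)) (ω * j) ε1 ε2 := by
    intro j hj
    induction j, hj using Nat.le_induction with
    | base =>
      rw [Nat.cast_one, mul_one, pow_one, mul_div_assoc,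
        div_self (Real.Gamma_pos_of_pos (by linarith)).ne', mul_one]
      exact hV.congr fun t _ => (hV1 t).symm
    | succ n hn ih =>
      have hωn : ω ≤ ω * n := le_mul_of_one_le_right hω.le (by exact_mod_cast hn)
      rw [pow_div_Gamma_succ c hω.le, Nat.cast_succ, mul_add_one]
      refine (ih.conv hV hV0 hc.le (by positivity) (by linarith) hωn hε1' hε2.le hε2').congr
        fun t ht => ?_
      rw [hrec (n + 1) (by omega) t ht, Nat.add_sub_cancel]
      rfl
  exact fun j hj => (key j hj).exists_bounds

theorem power_bounds_for_convolution_powers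
    (V : StieltjesFunction ℝ) (c ω a0 a1 ε1 ε2 b0 b1 : ℝ)
    (hc : 0 < c) (hω : 0 < ω) (ha0 : 0 < a0) (ha1 : 0 < a1)
    (hε1 : 0 < ε1) (hε1' : ε1 ≤ ω) (hε2 : 0 < ε2) (hε2' : ε2 ≤ ω)
    (hVpos : ∀ t, 0 ≤ V t) (hV0 : ∀ t < 0, V t = 0)
    (hVlow : ∀ t ≥ 0, b0 + b1 * t ^ (ω - ε1) ≤ V t - c * t ^ ω)
    (hVup : ∀ t ≥ 0, V t - c * t ^ ω ≤ a0 + a1 * t ^ (ω - ε2))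
    (Vseq : ℕ → ℝ → ℝ)
    (hV1 : ∀ t, Vseq 1 t = V t)
    (hrec : ∀ j : ℕ, 2 ≤ j → ∀ t, 0 ≤ t →
        Vseq j t = ∫ y in Set.Icc (0 : ℝ) t, Vseq (j - 1) (t - y) ∂V.measure) :
    ∀ j : ℕ, 1 ≤ j → ∃ a0j a1j b0j b1j : ℝ, 0 < a0j ∧ 0 < a1j ∧
      ∀ t, 0 ≤ t →
        b0j + b1j * t ^ (ω * (j : ℝ) - ε1)
            ≤ Vseq j t - ((c * Real.Gamma (ω + 1)) ^ j / Real.Gamma (ω * (j : ℝ) + 1)) * t ^ (ω * (j : ℝ))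
          ∧ Vseq j t - ((c * Real.Gamma (ω + 1)) ^ j / Real.Gamma (ω * (j : ℝ) + 1)) * t ^ (ω * (j : ℝ))
            ≤ a0j + a1j * t ^ (ω * (j : ℝ) - ε2) :=
  power_bounds_for_convolution_powers_general V c ω a0 a1 ε1 ε2 b0 b1 hc hω hε1' hε2 hε2' hV0 hVlow
    hVup Vseq hV1 hrec
end
end

section
/- Let $V:\mathbb{R}\to[0,\infty)$ be nondecreasing and right-continuous with $V(t)=0$ for $t<0$, and suppose $V(t)-c\,t^{\omega}\le a_0+a_1 t^{\omega-\varepsilon}$ for all $t\ge 0$, where $c,\omega,a_0,a_1>0$ and $0<\varepsilon\le\omega$. Then for every $b>0$ and every $t\ge0$: $\int_{[0,t]}(t-y)^b\,\mathrm{d}V(y)\le a_0 t^b + b\,a_1\,\mathrm{B}(b,1+\omega-\varepsilon)\,t^{\omega-\varepsilon+b} + b\,c\,\mathrm{B}(b,1+\omega)\,t^{\omega+b}$. -/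
/-! By the layer-cake formula, `∫_{[0,t]} (t - y)^b dV(y) = ∫_0^t b s^(b-1) V([0, t - s)) ds`,
and `V([0, x)) ≤ V(x)` because `V` is nonnegative to the left of `0`. Bounding `V(t - s)` by
`a₀ + a₁ (t - s)^(ω-ε) + c (t - s)^ω` leaves the integrals
`∫_0^t s^(b-1) (t - s)^α ds = B(b, α + 1) t^(b+α)`, which are Beta integrals after the
substitution `s = t x`. -/

open MeasureTheory Set

noncomputable section

/-- The real Beta function, `B(x, y) = Γ(x) Γ(y) / Γ(x + y)`. -/
def realBeta (x y : ℝ) : ℝ := Real.Gamma x * Real.Gamma y / Real.Gamma (x + y)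

lemma ofReal_rpow_mul_one_sub_rpow {u v x : ℝ} (hx : x ∈ Icc (0 : ℝ) 1) :
    ((x ^ (u - 1) * (1 - x) ^ (v - 1) : ℝ) : ℂ)
      = (x : ℂ) ^ ((u : ℂ) - 1) * (1 - (x : ℂ)) ^ ((v : ℂ) - 1) := by
  rw [Complex.ofReal_mul, Complex.ofReal_cpow hx.1, Complex.ofReal_cpow (sub_nonneg.2 hx.2)]
  push_cast
  rfl

lemma intervalIntegrable_rpow_mul_one_sub_rpow {u v : ℝ} (hu : 0 < u) (hv : 0 < v) :
    IntervalIntegrable (fun x : ℝ => x ^ (u - 1) * (1 - x) ^ (v - 1)) volume 0 1 := by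
  have h := (Complex.betaIntegral_convergent (u := u) (v := v) (by simpa) (by simpa)).congr
    fun x hx => (ofReal_rpow_mul_one_sub_rpow (u := u) (v := v)
      (Ioc_subset_Icc_self (uIoc_of_le (zero_le_one' ℝ) ▸ hx))).symm
  exact (intervalIntegrable_iff_integrableOn_Ioc_of_le zero_le_one).2
    (by simpa [IntegrableOn] using h.1.re)

lemma integral_rpow_mul_one_sub_rpow {u v : ℝ} (hu : 0 < u) (hv : 0 < v) :
    ∫ x in (0 : ℝ)..1, x ^ (u - 1) * (1 - x) ^ (v - 1) = realBeta u v := by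
  rw [show realBeta u v = ProbabilityTheory.beta u v from rfl,
    ProbabilityTheory.beta_eq_betaIntegralReal u v hu hv, Complex.betaIntegral,
    ← intervalIntegral.integral_congr fun x hx =>
      ofReal_rpow_mul_one_sub_rpow (uIcc_of_le (zero_le_one' ℝ) ▸ hx),
    intervalIntegral.integral_ofReal, Complex.ofReal_re]

lemma rpow_mul_sub_rpow_eq {b α t s : ℝ} (ht : 0 < t) (hs : s ∈ Icc 0 t) :
    s ^ (b - 1) * (t - s) ^ α = t ^ (b - 1 + α) * ((s / t) ^ (b - 1) * (1 - s / t) ^ α) := by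
  have hst : 0 ≤ 1 - s / t := sub_nonneg.2 ((div_le_one ht).2 hs.2)
  have hts : t - s = t * (1 - s / t) := by field_simp
  rw [Real.rpow_add ht, Real.div_rpow hs.1 ht.le, hts, Real.mul_rpow ht.le hst]
  field_simp

lemma intervalIntegrable_rpow_mul_sub_rpow {b α t : ℝ} (hb : 0 < b) (hα : -1 < α) (ht : 0 < t) :
    IntervalIntegrable (fun s : ℝ => s ^ (b - 1) * (t - s) ^ α) volume 0 t := by
  have h := ((intervalIntegrable_rpow_mul_one_sub_rpow hb (by linarith : 0 < α + 1)).comp_mul_left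
    (c := t⁻¹)).const_mul (t ^ (b - 1 + α))
  simp only [div_inv_eq_mul, zero_mul, one_mul, add_sub_cancel_right] at h
  refine h.congr fun s hs => ?_
  rw [rpow_mul_sub_rpow_eq ht (Ioc_subset_Icc_self (uIoc_of_le ht.le ▸ hs)), inv_mul_eq_div]

lemma integral_rpow_mul_sub_rpow_s4 {b α t : ℝ} (hb : 0 < b) (hα : -1 < α) (ht : 0 < t) :
    ∫ s in (0 : ℝ)..t, s ^ (b - 1) * (t - s) ^ α = realBeta b (α + 1) * t ^ (b + α) := by
  have hunit := integral_rpow_mul_one_sub_rpow hb (by linarith : 0 < α + 1)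
  rw [add_sub_cancel_right] at hunit
  rw [intervalIntegral.integral_congr fun s hs => rpow_mul_sub_rpow_eq ht (uIcc_of_le ht.le ▸ hs),
    intervalIntegral.integral_const_mul, intervalIntegral.integral_comp_div
      (fun x => x ^ (b - 1) * (1 - x) ^ α) ht.ne', zero_div, div_self ht.ne', hunit, smul_eq_mul,
    show b + α = 1 + (b - 1 + α) by ring, Real.rpow_add ht 1, Real.rpow_one]
  ring

lemma integral_mul_rpow_sub_one {b : ℝ} (hb : 0 < b) (x : ℝ) :
    ∫ s in (0 : ℝ)..x, b * s ^ (b - 1) = x ^ b := by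
  rw [intervalIntegral.integral_const_mul, integral_rpow (Or.inl (by linarith)), sub_add_cancel,
    Real.zero_rpow hb.ne', sub_zero, mul_div_cancel₀ _ hb.ne']

lemma lintegral_Icc_sub_rpow (μ : Measure ℝ) {b t : ℝ} (hb : 0 < b) (ht : 0 ≤ t) :
    ∫⁻ y in Icc 0 t, ENNReal.ofReal ((t - y) ^ b) ∂μ
      = ∫⁻ s in Ioc 0 t, μ (Ico 0 (t - s)) * ENNReal.ofReal (b * s ^ (b - 1)) := by
  have layer_cake := lintegral_comp_eq_lintegral_meas_lt_mul (μ.restrict (Icc 0 t))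
    (f := fun y => t - y) (g := fun s => b * s ^ (b - 1))
    (ae_restrict_of_forall_mem measurableSet_Icc fun y hy => sub_nonneg.2 hy.2) (by fun_prop)
    (fun r _ => (intervalIntegral.intervalIntegrable_rpow' (by linarith)).const_mul b)
    (ae_restrict_of_forall_mem measurableSet_Ioi fun s hs =>
      mul_nonneg hb.le (Real.rpow_nonneg (le_of_lt hs) _))
  have tail : ∀ s, 0 < s → μ.restrict (Icc 0 t) {y | s < t - y} = μ (Ico 0 (t - s)) := by
    intro s hs
    have hset : {y | s < t - y} ∩ Icc 0 t = Ico 0 (t - s) := by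
      ext y
      simp only [mem_inter_iff, mem_ofPred_eq, mem_Icc, mem_Ico]
      grind
    rw [Measure.restrict_apply' measurableSet_Icc, hset]
  have empty_tail : ∀ s, t < s → Ico 0 (t - s) = ∅ := fun s hs => Ico_eq_empty (by linarith)
  rw [← Ioc_union_Ioi_eq_Ioi ht, lintegral_union measurableSet_Ioi (Ioc_disjoint_Ioi le_rfl),
    setLIntegral_congr_fun measurableSet_Ioc fun s hs => by rw [tail s hs.1],
    setLIntegral_congr_fun measurableSet_Ioi fun s hs => by
      rw [tail s (ht.trans_lt hs), empty_tail s hs, measure_empty, zero_mul],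
    lintegral_zero, add_zero] at layer_cake
  simpa only [integral_mul_rpow_sub_one hb] using layer_cake

lemma StieltjesFunction.measure_Ico_le {V : StieltjesFunction ℝ} {a : ℝ} (hV : ∀ y < a, 0 ≤ V y)
    (x : ℝ) : V.measure (Ico a x) ≤ ENNReal.ofReal (V x) :=
  calc V.measure (Ico a x) ≤ V.measure (Ioc (a - 1) x) :=
        measure_mono fun y hy => ⟨by linarith [hy.1], hy.2.le⟩
    _ = ENNReal.ofReal (V x - V (a - 1)) := V.measure_Ioc _ _
    _ ≤ ENNReal.ofReal (V x) := ENNReal.ofReal_le_ofReal (by linarith [hV (a - 1) (by linarith)])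

lemma StieltjesFunction.integral_Icc_sub_rpow_le {V : StieltjesFunction ℝ} {F : ℝ → ℝ} {b t : ℝ}
    (hb : 0 < b) (ht : 0 ≤ t) (hV : ∀ y < 0, 0 ≤ V y) (hVF : ∀ y ∈ Icc 0 t, V y ≤ F y)
    (hF : IntervalIntegrable (fun s => b * s ^ (b - 1) * F (t - s)) volume 0 t) :
    ∫ y in Icc 0 t, (t - y) ^ b ∂V.measure ≤ ∫ s in 0..t, b * s ^ (b - 1) * F (t - s) := by
  set ψ := fun s => b * s ^ (b - 1) * F (t - s)
  have hts : ∀ s ∈ Ioc 0 t, t - s ∈ Icc 0 t := fun s hs => ⟨by linarith [hs.2], by linarith [hs.1]⟩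
  have hψ_nonneg : ∀ s ∈ Ioc 0 t, 0 ≤ ψ s := fun s hs =>
    mul_nonneg (mul_nonneg hb.le (Real.rpow_nonneg hs.1.le _))
      ((hV (-1) (by norm_num)).trans ((V.mono (by linarith [(hts s hs).1])).trans
        (hVF _ (hts s hs))))
  have hψ_int : IntegrableOn ψ (Ioc 0 t) := (intervalIntegrable_iff_integrableOn_Ioc_of_le ht).1 hF
  have key : ∫⁻ y in Icc 0 t, ENNReal.ofReal ((t - y) ^ b) ∂V.measure
      ≤ ENNReal.ofReal (∫ s in Ioc 0 t, ψ s) := by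
    rw [lintegral_Icc_sub_rpow _ hb ht, ofReal_integral_eq_lintegral_ofReal hψ_int
      (ae_restrict_of_forall_mem measurableSet_Ioc hψ_nonneg)]
    refine setLIntegral_mono' measurableSet_Ioc fun s hs => ?_
    calc V.measure (Ico 0 (t - s)) * ENNReal.ofReal (b * s ^ (b - 1))
        ≤ ENNReal.ofReal (F (t - s)) * ENNReal.ofReal (b * s ^ (b - 1)) := by
          gcongr
          exact (V.measure_Ico_le hV _).trans (ENNReal.ofReal_le_ofReal (hVF _ (hts s hs)))
      _ = ENNReal.ofReal (ψ s) := by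
          rw [← ENNReal.ofReal_mul' (mul_nonneg hb.le (Real.rpow_nonneg hs.1.le _)), mul_comm]
  rw [integral_eq_lintegral_of_nonneg_ae (ae_restrict_of_forall_mem measurableSet_Icc
      fun y hy => Real.rpow_nonneg (sub_nonneg.2 hy.2) _) (by fun_prop (disch := exact hb.le)),
    intervalIntegral.integral_of_le ht]
  exact ENNReal.toReal_le_of_le_ofReal (setIntegral_nonneg measurableSet_Ioc hψ_nonneg) key

section PowerSum

variable {a0 a1 c α β b t : ℝ}

lemma mul_rpow_mul_add_rpow_add_rpow_eq (s : ℝ) :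
    b * s ^ (b - 1) * (a0 + a1 * (t - s) ^ α + c * (t - s) ^ β)
      = a0 * (b * s ^ (b - 1)) + b * a1 * (s ^ (b - 1) * (t - s) ^ α)
        + b * c * (s ^ (b - 1) * (t - s) ^ β) := by
  ring

variable (hb : 0 < b) (hα : -1 < α) (hβ : -1 < β) (ht : 0 < t)
include hb hα hβ ht

lemma intervalIntegrable_mul_rpow_mul_add_rpow_add_rpow :
    IntervalIntegrable (fun s => b * s ^ (b - 1) * (a0 + a1 * (t - s) ^ α + c * (t - s) ^ β))
      volume 0 t := by
  simp only [mul_rpow_mul_add_rpow_add_rpow_eq]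
  exact ((((intervalIntegral.intervalIntegrable_rpow' (by linarith)).const_mul b).const_mul a0).add
    ((intervalIntegrable_rpow_mul_sub_rpow hb hα ht).const_mul (b * a1))).add
    ((intervalIntegrable_rpow_mul_sub_rpow hb hβ ht).const_mul (b * c))

lemma integral_mul_rpow_mul_add_rpow_add_rpow :
    ∫ s in (0 : ℝ)..t, b * s ^ (b - 1) * (a0 + a1 * (t - s) ^ α + c * (t - s) ^ β)
      = a0 * t ^ b + b * a1 * realBeta b (α + 1) * t ^ (b + α)
        + b * c * realBeta b (β + 1) * t ^ (b + β) := by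
  have hpow := ((intervalIntegral.intervalIntegrable_rpow' (a := 0) (b := t)
    (by linarith : -1 < b - 1)).const_mul b).const_mul a0
  have hlow := (intervalIntegrable_rpow_mul_sub_rpow hb hα ht).const_mul (b * a1)
  have hhigh := (intervalIntegrable_rpow_mul_sub_rpow hb hβ ht).const_mul (b * c)
  simp only [mul_rpow_mul_add_rpow_add_rpow_eq]
  rw [intervalIntegral.integral_add (hpow.add hlow) hhigh,
    intervalIntegral.integral_add hpow hlow, intervalIntegral.integral_const_mul a0,
    intervalIntegral.integral_const_mul (b * a1), intervalIntegral.integral_const_mul (b * c),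
    integral_mul_rpow_sub_one hb, integral_rpow_mul_sub_rpow_s4 hb hα ht,
    integral_rpow_mul_sub_rpow_s4 hb hβ ht]
  ring

end PowerSum

theorem stieltjes_integral_of_power_bound_general
    (V : StieltjesFunction ℝ) (c ω a0 a1 ε : ℝ)
    (hω : 0 < ω) (hε' : ε ≤ ω)
    (hV0 : ∀ t < 0, V t = 0)
    (hVup : ∀ t, 0 ≤ t → V t - c * t ^ ω ≤ a0 + a1 * t ^ (ω - ε))
    (b : ℝ) (hb : 0 < b) (t : ℝ) (ht : 0 ≤ t) :
    (∫ y in Set.Icc (0 : ℝ) t, (t - y) ^ b ∂V.measure)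
      ≤ a0 * t ^ b + b * a1 * realBeta b (1 + ω - ε) * t ^ (ω - ε + b)
        + b * c * realBeta b (1 + ω) * t ^ (ω + b) := by
  rcases ht.eq_or_lt with rfl | ht
  · simp [Real.zero_rpow hb.ne', Real.zero_rpow (by linarith : ω - ε + b ≠ 0),
      Real.zero_rpow (by linarith : ω + b ≠ 0)]
  have hα : -1 < ω - ε := by linarith
  have hβ : -1 < ω := by linarith
  calc _ ≤ ∫ s in 0..t, b * s ^ (b - 1) * (a0 + a1 * (t - s) ^ (ω - ε) + c * (t - s) ^ ω) :=
        V.integral_Icc_sub_rpow_le (F := fun x => a0 + a1 * x ^ (ω - ε) + c * x ^ ω) hb ht.le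
          (fun y hy => (hV0 y hy).ge) (fun y hy => by linarith [hVup y hy.1])
          (intervalIntegrable_mul_rpow_mul_add_rpow_add_rpow hb hα hβ ht)
    _ = _ := by
      rw [integral_mul_rpow_mul_add_rpow_add_rpow hb hα hβ ht]
      ring_nf

theorem stieltjes_integral_of_power_bound
    (V : StieltjesFunction ℝ) (c ω a0 a1 ε : ℝ)
    (hc : 0 < c) (hω : 0 < ω) (ha0 : 0 < a0) (ha1 : 0 < a1)
    (hε : 0 < ε) (hε' : ε ≤ ω)
    (hVpos : ∀ t, 0 ≤ V t) (hV0 : ∀ t < 0, V t = 0)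
    (hVup : ∀ t, 0 ≤ t → V t - c * t ^ ω ≤ a0 + a1 * t ^ (ω - ε))
    (b : ℝ) (hb : 0 < b) (t : ℝ) (ht : 0 ≤ t) :
    (∫ y in Set.Icc (0 : ℝ) t, (t - y) ^ b ∂V.measure)
      ≤ a0 * t ^ b + b * a1 * realBeta b (1 + ω - ε) * t ^ (ω - ε + b)
        + b * c * realBeta b (1 + ω) * t ^ (ω + b) :=
  stieltjes_integral_of_power_bound_general V c ω a0 a1 ε hω hε' hV0 hVup b hb t ht
end
end

section
/- Let $(\Omega,\mathcal{F},\mathbb{P})$ be a probability space and let $N:\Omega\times[0,\infty)\to[0,\infty)$ be such that $t\mapsto N(\omega,t)$ is nondecreasing for every $\omega$, each $N(\cdot,t)$ is measurable and square-integrable, and set $V(t):=\mathbb{E}\,N(t)$. Assume: (i) $b_0+b_1 t^{\omega-\varepsilon_1}\le V(t)-c\,t^{\omega}\le a_0+a_1 t^{\omega-\varepsilon_2}$ for all $t\ge 0$, where $c,\omega,a_0,a_1>0$, $0<\varepsilon_1,\varepsilon_2\le\omega$, $b_0,b_1\in\mathbb{R}$; (ii) there exist $C>0$ and $\gamma\in(0,\omega)$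 with $\mathrm{Var}\,N(t)\le C\,t^{2\gamma}$ for all $t\ge 1$. Then $\lim_{t\to\infty} N(t)/V(t)=1$ almost surely. -/
open MeasureTheory ProbabilityTheory Set Filter

noncomputable section

open Topology

/-!
By (i), `V t ∼ c t^w`. Along the mesh `t_k = (k + 1)^β` with `β = 1/(w - γ)`, Chebyshev's
inequality bounds `P(|N(t_k) - V(t_k)| ≥ ε c t_k^w)` by a multiple of
`t_k^(2γ - 2w) = (k + 1)^(-2)`, which is summable, so Borel–Cantelli gives `N(t_k)/(c t_k^w) → 1`
almost surely. Since `N` is nondecreasing and `t_{k+1}^w / t_k^w → 1`, sandwiching `N(t)` between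
consecutive mesh values extends the limit to continuous `t`.
-/

theorem tendsto_add_mul_rpow_sub_div_mul_rpow {w δ : ℝ} (hw : 0 < w) (hδ : 0 < δ) (A B c : ℝ) :
    Tendsto (fun t : ℝ => (A + B * t ^ (w - δ)) / (c * t ^ w)) atTop (𝓝 0) := by
  have hlim : Tendsto (fun t : ℝ => A / c * t ^ (-w) + B / c * t ^ (-δ)) atTop (𝓝 0) := by
    simpa using ((tendsto_rpow_neg_atTop hw).const_mul (A / c)).add
      ((tendsto_rpow_neg_atTop hδ).const_mul (B / c))
  refine hlim.congr' ?_
  filter_upwards [eventually_gt_atTop 0] with t ht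
  have htw : t ^ w ≠ 0 := (Real.rpow_pos_of_pos ht w).ne'
  rw [Real.rpow_neg ht.le, Real.rpow_neg ht.le, Real.rpow_sub ht, ← Real.inv_rpow ht.le,
    Real.inv_rpow ht.le]
  field_simp

theorem tendsto_div_mul_rpow_of_sub_bounds {V : ℝ → ℝ} {c w ε₁ ε₂ a₀ a₁ b₀ b₁ : ℝ}
    (hc : 0 < c) (hw : 0 < w) (hε₁ : 0 < ε₁) (hε₂ : 0 < ε₂)
    (hlow : ∀ᶠ t in atTop, b₀ + b₁ * t ^ (w - ε₁) ≤ V t - c * t ^ w)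
    (hup : ∀ᶠ t in atTop, V t - c * t ^ w ≤ a₀ + a₁ * t ^ (w - ε₂)) :
    Tendsto (fun t => V t / (c * t ^ w)) atTop (𝓝 1) := by
  have hrel : Tendsto (fun t => (V t - c * t ^ w) / (c * t ^ w)) atTop (𝓝 0) := by
    refine tendsto_of_tendsto_of_tendsto_of_le_of_le'
      (tendsto_add_mul_rpow_sub_div_mul_rpow hw hε₁ b₀ b₁ c)
      (tendsto_add_mul_rpow_sub_div_mul_rpow hw hε₂ a₀ a₁ c) ?_ ?_
    · filter_upwards [hlow, eventually_gt_atTop 0] with t h ht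
      exact div_le_div_of_nonneg_right h (by positivity)
    · filter_upwards [hup, eventually_gt_atTop 0] with t h ht
      exact div_le_div_of_nonneg_right h (by positivity)
  have hone := hrel.const_add 1
  rw [add_zero] at hone
  refine hone.congr' ?_
  filter_upwards [eventually_gt_atTop 0] with t ht
  have : c * t ^ w ≠ 0 := by positivity
  field_simp
  ring

theorem ae_tendsto_sub_integral_div_of_summable_variance_div_sq {Ω : Type*}
    [MeasurableSpace Ω] {P : Measure Ω} [IsFiniteMeasure P] {X : ℕ → Ω → ℝ}
    (hX : ∀ k, MemLp (X k) 2 P) {d : ℕ → ℝ} (hd : ∀ k, 0 < d k)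
    (hs : Summable fun k => variance (X k) P / d k ^ 2) :
    ∀ᵐ ω ∂P, Tendsto (fun k => (X k ω - P[X k]) / d k) atTop (𝓝 0) := by
  have hsmall : ∀ m : ℕ, ∀ᵐ ω ∂P, ∀ᶠ k in atTop,
      |X k ω - P[X k]| < 1 / ((m : ℝ) + 1) * d k := by
    intro m
    set ε : ℝ := 1 / ((m : ℝ) + 1)
    have hε : 0 < ε := by positivity
    have hcheb : ∀ k, P {ω | ε * d k ≤ |X k ω - P[X k]|}
        ≤ ENNReal.ofReal (ε⁻¹ ^ 2 * (variance (X k) P / d k ^ 2)) := fun k => by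
      refine (meas_ge_le_variance_div_sq (hX k) (mul_pos hε (hd k))).trans_eq ?_
      congr 1
      field_simp
    have hsum : ∑' k, P {ω | ε * d k ≤ |X k ω - P[X k]|} ≠ ⊤ := by
      refine ne_top_of_le_ne_top ?_ (ENNReal.tsum_le_tsum hcheb)
      rw [← ENNReal.ofReal_tsum_of_nonneg
        (fun k => mul_nonneg (by positivity) (div_nonneg (variance_nonneg _ _) (by positivity)))
        (hs.mul_left _)]
      exact ENNReal.ofReal_ne_top
    filter_upwards [ae_eventually_notMem hsum] with ω hω
    filter_upwards [hω] with k hk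
    simpa using hk
  filter_upwards [ae_all_iff.2 hsmall] with ω hω
  rw [NormedAddGroup.tendsto_nhds_zero]
  intro ε hε
  obtain ⟨m, hm⟩ := exists_nat_one_div_lt hε
  filter_upwards [hω m] with k hk
  rw [Real.norm_eq_abs, abs_div, abs_of_pos (hd k), div_lt_iff₀ (hd k)]
  exact hk.trans_le (mul_le_mul_of_nonneg_right hm.le (hd k).le)

theorem tendsto_div_of_monotoneOn_of_tendsto_comp {f g : ℝ → ℝ} {u : ℕ → ℝ} {κ : ℝ → ℕ} {L : ℝ}
    (hf : MonotoneOn f (Ici 0)) (hg : MonotoneOn g (Ici 0)) (hu : ∀ k, 0 ≤ u k)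
    (hfu : ∀ k, 0 ≤ f (u k)) (hgu : ∀ k, 0 < g (u k)) (hκ : Tendsto κ atTop atTop)
    (hbr : ∀ᶠ t in atTop, u (κ t) ≤ t ∧ t ≤ u (κ t + 1))
    (hlim : Tendsto (fun k => f (u k) / g (u k)) atTop (𝓝 L))
    (hratio : Tendsto (fun k => g (u (k + 1)) / g (u k)) atTop (𝓝 1)) :
    Tendsto (fun t => f t / g t) atTop (𝓝 L) := by
  have hlow : Tendsto (fun k => f (u k) / g (u (k + 1))) atTop (𝓝 L) := by
    have h := hlim.div hratio one_ne_zero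
    rw [div_one] at h
    refine h.congr fun k => ?_
    have := (hgu k).ne'
    have := (hgu (k + 1)).ne'
    simp only [Pi.div_apply]
    field_simp
  have hup : Tendsto (fun k => f (u (k + 1)) / g (u k)) atTop (𝓝 L) := by
    have h := (hlim.comp (tendsto_add_atTop_nat 1)).mul hratio
    rw [mul_one] at h
    refine h.congr fun k => ?_
    have := (hgu (k + 1)).ne'
    simp only [Function.comp_apply]
    field_simp
  refine tendsto_of_tendsto_of_tendsto_of_le_of_le' (hlow.comp hκ) (hup.comp hκ) ?_ ?_
  · filter_upwards [hbr] with t ⟨hlt, hgt⟩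
    have ht : 0 ≤ t := (hu _).trans hlt
    have hft : f (u (κ t)) ≤ f t := hf (hu _) ht hlt
    exact div_le_div₀ ((hfu _).trans hft) hft ((hgu _).trans_le (hg (hu _) ht hlt))
      (hg ht (hu _) hgt)
  · filter_upwards [hbr] with t ⟨hlt, hgt⟩
    have ht : 0 ≤ t := (hu _).trans hlt
    exact div_le_div₀ (hfu _) (hf ht (hu _) hgt) (hgu _) (hg (hu _) ht hlt)

theorem add_one_rpow_bracket {β t : ℝ} (hβ : 0 < β) (ht : 1 ≤ t) :
    let k := ⌊t ^ β⁻¹⌋₊ - 1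
    ((k : ℝ) + 1) ^ β ≤ t ∧ t ≤ (((k + 1 : ℕ) : ℝ) + 1) ^ β := by
  have hfloor : 1 ≤ ⌊t ^ β⁻¹⌋₊ :=
    Nat.le_floor (by simpa using Real.one_le_rpow ht (inv_pos.2 hβ).le)
  have hk : ((⌊t ^ β⁻¹⌋₊ - 1 : ℕ) : ℝ) + 1 = ⌊t ^ β⁻¹⌋₊ := by
    rw [Nat.cast_sub hfloor]; ring
  have ht0 : 0 ≤ t := zero_le_one.trans ht
  refine ⟨?_, ?_⟩
  · rw [hk, ← Real.le_rpow_inv_iff_of_pos (Nat.cast_nonneg _) ht0 hβ]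
    exact Nat.floor_le (by positivity)
  · rw [Nat.sub_add_cancel hfloor, ← Real.rpow_inv_le_iff_of_pos ht0 (by positivity) hβ]
    exact (Nat.lt_floor_add_one _).le

theorem tendsto_mul_add_one_rpow_succ_div (c β w : ℝ) (hc : c ≠ 0) :
    Tendsto (fun k : ℕ => c * ((((k + 1 : ℕ) : ℝ) + 1) ^ β) ^ w / (c * (((k : ℝ) + 1) ^ β) ^ w))
      atTop (𝓝 1) := by
  have hbase : Tendsto (fun k : ℕ => 1 + 1 / ((k : ℝ) + 1)) atTop (𝓝 1) := by
    simpa using tendsto_one_div_add_atTop_nhds_zero_nat.const_add (1 : ℝ)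
  have hpow := hbase.rpow_const (p := β * w) (Or.inl one_ne_zero)
  rw [Real.one_rpow] at hpow
  refine hpow.congr fun k => ?_
  have hk : (0 : ℝ) < (k : ℝ) + 1 := by positivity
  rw [mul_div_mul_left _ _ hc, ← Real.rpow_mul hk.le, ← Real.rpow_mul (by positivity),
    ← Real.div_rpow (by positivity) hk.le]
  congr 1
  push_cast
  field_simp

theorem summable_div_mul_add_one_rpow_sq {v : ℝ → ℝ} {C c w γ : ℝ} (hv0 : ∀ t, 0 ≤ v t)
    (hv : ∀ t, 1 ≤ t → v t ≤ C * t ^ (2 * γ)) (hγw : γ < w) :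
    Summable fun k : ℕ =>
      v (((k : ℝ) + 1) ^ (w - γ)⁻¹) / (c * (((k : ℝ) + 1) ^ (w - γ)⁻¹) ^ w) ^ 2 := by
  have hwγ : 0 < w - γ := sub_pos.2 hγw
  have hsum : Summable fun k : ℕ => C / c ^ 2 * ((k : ℝ) + 1) ^ (-2 : ℝ) := by
    refine Summable.mul_left _ ?_
    have := (summable_nat_add_iff 1).2 (Real.summable_nat_rpow.2 (by norm_num : (-2 : ℝ) < -1))
    simpa using this
  refine hsum.of_nonneg_of_le (fun k => div_nonneg (hv0 _) (sq_nonneg _)) fun k => ?_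
  have hk : (0 : ℝ) < (k : ℝ) + 1 := by positivity
  set s := ((k : ℝ) + 1) ^ (w - γ)⁻¹
  have hs0 : 0 < s := by positivity
  have hs1 : 1 ≤ s := Real.one_le_rpow (by linarith [k.cast_nonneg (α := ℝ)]) (by positivity)
  calc v s / (c * s ^ w) ^ 2 ≤ C * s ^ (2 * γ) / (c * s ^ w) ^ 2 :=
        div_le_div_of_nonneg_right (hv s hs1) (sq_nonneg _)
    _ = C / c ^ 2 * (s ^ (2 * γ) / s ^ (2 * w)) := by
        have hsq : (s ^ w) ^ 2 = s ^ (2 * w) := by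
          rw [← Real.rpow_natCast, ← Real.rpow_mul hs0.le]
          norm_num [mul_comm]
        rw [mul_pow, hsq, mul_div_mul_comm]
    _ = C / c ^ 2 * ((k : ℝ) + 1) ^ (-2 : ℝ) := by
        rw [← Real.rpow_sub hs0, ← Real.rpow_mul hk.le]
        congr 2
        field_simp
        ring

theorem strong_law_for_counting_function_general
    {Ω : Type*} [MeasurableSpace Ω] (P : Measure Ω) [IsProbabilityMeasure P]
    (N : Ω → ℝ → ℝ)
    (hnonneg : ∀ ω t, 0 ≤ t → 0 ≤ N ω t)
    (hmono : ∀ ω, MonotoneOn (N ω) (Set.Ici 0))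
    (hL2 : ∀ t, 0 ≤ t → MemLp (fun ω => N ω t) 2 P)
    (c w a0 a1 ε1 ε2 b0 b1 C γ : ℝ)
    (hc : 0 < c) (hw : 0 < w)
    (hε1 : 0 < ε1) (hε2 : 0 < ε2)
    (hVlow : ∀ t, 0 ≤ t →
      b0 + b1 * t ^ (w - ε1) ≤ (∫ ω, N ω t ∂P) - c * t ^ w)
    (hVup : ∀ t, 0 ≤ t →
      (∫ ω, N ω t ∂P) - c * t ^ w ≤ a0 + a1 * t ^ (w - ε2))
    (hγw : γ < w)
    (hvar : ∀ t, 1 ≤ t → variance (fun ω => N ω t) P ≤ C * t ^ (2 * γ)) :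
    ∀ᵐ ω ∂P, Tendsto (fun t => N ω t / (∫ ω', N ω' t ∂P)) atTop (nhds 1) := by
  have hV : Tendsto (fun t => (∫ ω, N ω t ∂P) / (c * t ^ w)) atTop (𝓝 1) :=
    tendsto_div_mul_rpow_of_sub_bounds hc hw hε1 hε2 (eventually_atTop.2 ⟨0, hVlow⟩)
      (eventually_atTop.2 ⟨0, hVup⟩)
  set β := (w - γ)⁻¹
  have hβ : 0 < β := inv_pos.2 (sub_pos.2 hγw)
  set u : ℕ → ℝ := fun k => ((k : ℝ) + 1) ^ β
  have hu : ∀ k, 1 ≤ u k := fun k => Real.one_le_rpow (by simp) hβ.le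
  have hcu : ∀ k, 0 < c * u k ^ w := fun k => by have := hu k; positivity
  have hu_top : Tendsto u atTop atTop :=
    (tendsto_rpow_atTop hβ).comp (tendsto_atTop_add_const_right _ 1 tendsto_natCast_atTop_atTop)
  filter_upwards [ae_tendsto_sub_integral_div_of_summable_variance_div_sq
    (fun k => hL2 (u k) (zero_le_one.trans (hu k))) hcu
    (summable_div_mul_add_one_rpow_sq (v := fun t => variance (fun ω => N ω t) P)
      (fun t => variance_nonneg _ _) hvar hγw)] with ω hω
  have hmesh : Tendsto (fun k => N ω (u k) / (c * u k ^ w)) atTop (𝓝 1) := by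
    have h := hω.add (hV.comp hu_top)
    rw [zero_add] at h
    exact h.congr fun k => by simp [← add_div]
  have hN : Tendsto (fun t => N ω t / (c * t ^ w)) atTop (𝓝 1) :=
    tendsto_div_of_monotoneOn_of_tendsto_comp (hmono ω)
      (fun x hx y hy hxy => mul_le_mul_of_nonneg_left (Real.rpow_le_rpow hx hxy hw.le) hc.le)
      (fun k => zero_le_one.trans (hu k)) (fun k => hnonneg ω _ (zero_le_one.trans (hu k))) hcu
      ((tendsto_sub_atTop_nat 1).comp
        (tendsto_nat_floor_atTop.comp (tendsto_rpow_atTop (inv_pos.2 hβ))))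
      ((eventually_ge_atTop 1).mono fun t ht => add_one_rpow_bracket hβ ht) hmesh
      (tendsto_mul_add_one_rpow_succ_div c β w hc.ne')
  have h := hN.div hV one_ne_zero
  rw [div_one] at h
  refine h.congr' ?_
  filter_upwards [eventually_gt_atTop 0] with t ht
  exact div_div_div_cancel_right₀ (by positivity) _ _

theorem strong_law_for_counting_function
    {Ω : Type*} [MeasurableSpace Ω] (P : Measure Ω) [IsProbabilityMeasure P]
    (N : Ω → ℝ → ℝ)
    (hnonneg : ∀ ω t, 0 ≤ t → 0 ≤ N ω t)
    (hmono : ∀ ω, MonotoneOn (N ω) (Set.Ici 0))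
    (hmeas : ∀ t, 0 ≤ t → Measurable (fun ω => N ω t))
    (hL2 : ∀ t, 0 ≤ t → MemLp (fun ω => N ω t) 2 P)
    (c w a0 a1 ε1 ε2 b0 b1 C γ : ℝ)
    (hc : 0 < c) (hw : 0 < w) (ha0 : 0 < a0) (ha1 : 0 < a1)
    (hε1 : 0 < ε1) (hε1' : ε1 ≤ w) (hε2 : 0 < ε2) (hε2' : ε2 ≤ w)
    (hVlow : ∀ t, 0 ≤ t →
      b0 + b1 * t ^ (w - ε1) ≤ (∫ ω, N ω t ∂P) - c * t ^ w)
    (hVup : ∀ t, 0 ≤ t →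
      (∫ ω, N ω t ∂P) - c * t ^ w ≤ a0 + a1 * t ^ (w - ε2))
    (hC : 0 < C) (hγ : 0 < γ) (hγw : γ < w)
    (hvar : ∀ t, 1 ≤ t → variance (fun ω => N ω t) P ≤ C * t ^ (2 * γ)) :
    ∀ᵐ ω ∂P, Tendsto (fun t => N ω t / (∫ ω', N ω' t ∂P)) atTop (nhds 1) :=
  strong_law_for_counting_function_general P N hnonneg hmono hL2 c w a0 a1 ε1 ε2 b0 b1 C γ hc hw hε1
    hε2 hVlow hVup hγw hvar
end
end

section
/- Let $A,B:\mathbb{R}\to[0,\infty)$ be nondecreasing right-continuous functions with $A(t)=B(t)=0$ for $t<0$, and let $h:\mathbb{R}\to[0,\infty)$ be nondecreasing and right-continuous with $h(t)=0$ for $t<0$. Then for every $s\ge 0$: $\Big|\int_{[0,s]}h(s-x)\,\mathrm{d}A(x)-\int_{[0,s]}h(s-x)\,\mathrm{d}B(x)\Big| \le h(s)\cdot\sup_{y\in[0,s]}|A(y)-B(y)|$, where the integrals are against the Lebesgue–Stieltjes measures of $A$ and $B$ (which give the point $0$ masses $A(0)$ and $B(0)$ respectively). -/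
/-!
Computing the `μ_F ⊗ μ_h`-mass of the triangle `{x, y ≥ 0, x + y ≤ s}` in both orders gives
`∫_{[0,s]} h(s - x) dF(x) = ∫_{[0,s]} F(s - y) dh(y)`, because `μ_F [0, a] = F a`.
The difference of the two integrals is therefore the integral against `μ_h` of
`A(s - y) - B(s - y)`, which is bounded by the supremum, over a set of `μ_h`-mass `h s`.
-/

open MeasureTheory Set

namespace StieltjesFunction

variable (F : StieltjesFunction ℝ)

theorem leftLim_zero_of_eq_zero_of_neg (hF0 : ∀ t < 0, F t = 0) :
    Function.leftLim F 0 = 0 :=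
  leftLim_eq_of_tendsto <|
    tendsto_const_nhds.congr' (eventually_nhdsWithin_of_forall fun t ht => (hF0 t ht).symm)

theorem nonneg_of_eq_zero_of_neg (hF0 : ∀ t < 0, F t = 0) (t : ℝ) : 0 ≤ F t := by
  rcases lt_or_ge t 0 with ht | ht
  · exact (hF0 t ht).ge
  · exact (hF0 (-1) (by norm_num)).symm.le.trans (F.mono (by linarith))

theorem measure_Icc_zero_of_eq_zero_of_neg (hF0 : ∀ t < 0, F t = 0) (a : ℝ) :
    F.measure (Icc 0 a) = ENNReal.ofReal (F a) := by
  rw [measure_Icc, leftLim_zero_of_eq_zero_of_neg F hF0, sub_zero]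

end StieltjesFunction

theorem indicator_Icc_measure_Icc_sub (ν : Measure ℝ) (s x : ℝ) :
    (Icc 0 s).indicator (fun x => ν (Icc 0 (s - x))) x =
      ν {y | 0 ≤ x ∧ 0 ≤ y ∧ x + y ≤ s} := by
  by_cases hx : x ∈ Icc 0 s
  · rw [indicator_of_mem hx]
    congr 1
    ext y
    simp only [mem_Icc, mem_ofPred_eq]
    constructor
    · rintro ⟨hy, hys⟩
      exact ⟨hx.1, hy, by linarith⟩
    · rintro ⟨-, hy, hxy⟩
      exact ⟨hy, by linarith⟩
  · have hempty : {y | 0 ≤ x ∧ 0 ≤ y ∧ x + y ≤ s} = ∅ :=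
      eq_empty_of_forall_notMem fun y ⟨hx0, hy, hxy⟩ => hx ⟨hx0, by linarith⟩
    rw [indicator_of_notMem hx, hempty, measure_empty]

/-- Both sides are the product measure of the triangle `{x, y ≥ 0, x + y ≤ s}`. -/
theorem lintegral_Icc_measure_Icc_sub_comm (μ ν : Measure ℝ) [SFinite μ] [SFinite ν] (s : ℝ) :
    ∫⁻ x in Icc 0 s, ν (Icc 0 (s - x)) ∂μ = ∫⁻ y in Icc 0 s, μ (Icc 0 (s - y)) ∂ν := by
  set T : Set (ℝ × ℝ) := {p | 0 ≤ p.1 ∧ 0 ≤ p.2 ∧ p.1 + p.2 ≤ s}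
  have hT : MeasurableSet T := by measurability
  calc ∫⁻ x in Icc 0 s, ν (Icc 0 (s - x)) ∂μ
        = ∫⁻ x, ν (Prod.mk x ⁻¹' T) ∂μ := by
        rw [← lintegral_indicator measurableSet_Icc]
        exact lintegral_congr fun x => indicator_Icc_measure_Icc_sub ν s x
    _ = μ.prod ν T := (Measure.prod_apply hT).symm
    _ = ∫⁻ y, μ ((fun x => (x, y)) ⁻¹' T) ∂ν := Measure.prod_apply_symm hT
    _ = ∫⁻ y in Icc 0 s, μ (Icc 0 (s - y)) ∂ν := by
        rw [← lintegral_indicator measurableSet_Icc]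
        refine lintegral_congr fun y => ?_
        rw [indicator_Icc_measure_Icc_sub μ s y]
        congr 1
        ext x
        simp only [T, mem_preimage, mem_ofPred_eq]
        rw [add_comm]
        tauto

namespace StieltjesFunction

variable (F G : StieltjesFunction ℝ)

theorem setIntegral_Icc_sub_comm (hF0 : ∀ t < 0, F t = 0) (hG0 : ∀ t < 0, G t = 0)
    (s : ℝ) :
    ∫ x in Icc 0 s, G (s - x) ∂F.measure = ∫ y in Icc 0 s, F (s - y) ∂G.measure := by
  have hmeas : ∀ H : StieltjesFunction ℝ, Measurable fun y => H (s - y) := fun H =>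
    H.mono.measurable.comp (measurable_const.sub measurable_id)
  rw [integral_eq_lintegral_of_nonneg_ae
      (.of_forall fun _ => G.nonneg_of_eq_zero_of_neg hG0 _) (hmeas G).aestronglyMeasurable,
    integral_eq_lintegral_of_nonneg_ae
      (.of_forall fun _ => F.nonneg_of_eq_zero_of_neg hF0 _) (hmeas F).aestronglyMeasurable]
  simp only [← measure_Icc_zero_of_eq_zero_of_neg _ hF0,
    ← measure_Icc_zero_of_eq_zero_of_neg _ hG0]
  rw [lintegral_Icc_measure_Icc_sub_comm]

theorem integrableOn_comp_const_sub (μ : Measure ℝ) [IsFiniteMeasureOnCompacts μ] (s a b : ℝ) :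
    IntegrableOn (fun y => F (s - y)) (Icc a b) μ :=
  (F.mono.comp_antitone fun _ _ hxy => sub_le_sub_left hxy s).antitoneOn _
    |>.integrableOn_isCompact isCompact_Icc

theorem abs_sub_le_iSup_Icc (hF0 : ∀ t < 0, F t = 0) (hG0 : ∀ t < 0, G t = 0) {s y : ℝ}
    (hy : y ∈ Icc 0 s) : |F y - G y| ≤ ⨆ z : Icc (0 : ℝ) s, |F z - G z| := by
  refine le_ciSup (f := fun z : Icc (0 : ℝ) s => |F z - G z|) ⟨max (F s) (G s), ?_⟩ ⟨y, hy⟩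
  rintro _ ⟨⟨z, hz⟩, rfl⟩
  exact abs_sub_le_of_nonneg_of_le (F.nonneg_of_eq_zero_of_neg hF0 z)
    ((F.mono hz.2).trans (le_max_left _ _)) (G.nonneg_of_eq_zero_of_neg hG0 z)
    ((G.mono hz.2).trans (le_max_right _ _))

end StieltjesFunction

theorem stieltjes_convolution_difference_bound_general
    (A B h : StieltjesFunction ℝ)
    (hA0 : ∀ t < 0, A t = 0) (hB0 : ∀ t < 0, B t = 0) (hh0 : ∀ t < 0, h t = 0)
    (s : ℝ) :
    |(∫ x in Set.Icc (0 : ℝ) s, h (s - x) ∂A.measure)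
        - ∫ x in Set.Icc (0 : ℝ) s, h (s - x) ∂B.measure|
      ≤ h s * ⨆ y : Set.Icc (0 : ℝ) s, |A y - B y| := by
  rw [A.setIntegral_Icc_sub_comm h hA0 hh0, B.setIntegral_Icc_sub_comm h hB0 hh0,
    ← integral_sub (A.integrableOn_comp_const_sub _ s 0 s)
      (B.integrableOn_comp_const_sub _ s 0 s),
    ← Real.norm_eq_abs]
  calc ‖∫ y in Icc 0 s, A (s - y) - B (s - y) ∂h.measure‖
      ≤ (⨆ y : Icc (0 : ℝ) s, |A y - B y|) * h.measure.real (Icc 0 s) :=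
        norm_setIntegral_le_of_norm_le_const measure_Icc_lt_top fun y hy =>
          A.abs_sub_le_iSup_Icc B hA0 hB0 ⟨by linarith [hy.2], by linarith [hy.1]⟩
    _ = h s * ⨆ y : Icc (0 : ℝ) s, |A y - B y| := by
        rw [measureReal_def, h.measure_Icc_zero_of_eq_zero_of_neg hh0,
          ENNReal.toReal_ofReal (h.nonneg_of_eq_zero_of_neg hh0 s), mul_comm]

theorem stieltjes_convolution_difference_bound
    (A B h : StieltjesFunction ℝ)
    (hA0 : ∀ t < 0, A t = 0) (hB0 : ∀ t < 0, B t = 0) (hh0 : ∀ t < 0, h t = 0)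
    (hApos : ∀ t, 0 ≤ A t) (hBpos : ∀ t, 0 ≤ B t) (hhpos : ∀ t, 0 ≤ h t)
    (s : ℝ) (hs : 0 ≤ s) :
    |(∫ x in Set.Icc (0 : ℝ) s, h (s - x) ∂A.measure)
        - ∫ x in Set.Icc (0 : ℝ) s, h (s - x) ∂B.measure|
      ≤ h s * ⨆ y : Set.Icc (0 : ℝ) s, |A y - B y| :=
  stieltjes_convolution_difference_bound_general A B h hA0 hB0 hh0 s
end

section
/- Let $m>0$ and let $U:[0,\infty)\to[0,\infty)$ be nondecreasing and right-continuous with $0\le U(t)-m^{-1}t\le a_0^{*}$ for all $t\ge0$ and some constant $a_0^{*}>0$. Let $f:[0,\infty)\to[0,\infty)$ be nondecreasing and right-continuous with $f(0)=0$ and $\beta_0+\beta_1 x^{q-r_2}\le f(x)-c_0 x^{q}\le \alpha_0+\alpha_1 x^{q-r_1}$ for all $x>0$, where $c_0,q,\alpha_0,\alpha_1>0$, $0<r_1,r_2\le q$ and $\beta_0,\beta_1<0$. Define $V(t):=\int_{[0,t]}f(t-y)\,\mathrm{d}U(y)$. Then there exist constants $a_0,a_1>0$ and $b_0,b_1\le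 0$ such that for all $t>0$: $b_0+b_1 t^{\,q-\min(r_2-1,0)}\ \le\ V(t)-c_0\,(m(q+1))^{-1}\,t^{q+1}\ \le\ a_0+a_1 t^{\,q-\min(r_1-1,0)}$. -/
open MeasureTheory Set

noncomputable section

/-! Extend `f` by `f 0 = 0` to the left, making it a Stieltjes function `F`. Fubini on the region
`{y + s ≤ t}` gives `∫_{[0,t]} F(t - y) dU(y) = ∫_{(0,t]} U(t - s) dF(s)`, which is monotone in `U`;
for `U = id` it is `∫₀ᵗ F`. So the sandwich `t/m ≤ U t ≤ t/m + a₀*` yields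
`m⁻¹ ∫₀ᵗ f ≤ V t ≤ m⁻¹ ∫₀ᵗ f + a₀* f t`. The power bounds on `f` integrate explicitly, and every
power of `t` left over has exponent in `[0, P]`, `P = q - min (r - 1) 0`, so is at most
`1 + t ^ P`. -/

theorem Antitone.integrableOn_Ioc {μ : Measure ℝ} [IsLocallyFiniteMeasure μ] {g : ℝ → ℝ}
    (hg : Antitone g) (a b : ℝ) : IntegrableOn g (Ioc a b) μ :=
  (hg.locallyIntegrable.integrableOn_isCompact isCompact_Icc).mono_set Ioc_subset_Icc_self

namespace StieltjesFunction

theorem lintegral_Icc_comp_sub (F G : StieltjesFunction ℝ) (t : ℝ) :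
    ∫⁻ y in Icc 0 t, ENNReal.ofReal (F (t - y) - F 0) ∂G.measure
      = ∫⁻ s in Ioc 0 t, ENNReal.ofReal (G (t - s) - Function.leftLim G 0) ∂F.measure := by
  have hS : MeasurableSet {p : ℝ × ℝ | p.1 + p.2 ≤ t} :=
    measurableSet_le (measurable_fst.add measurable_snd) measurable_const
  calc ∫⁻ y in Icc 0 t, ENNReal.ofReal (F (t - y) - F 0) ∂G.measure
      = ((G.measure.restrict (Icc 0 t)).prod (F.measure.restrict (Ioc 0 t)))
          {p | p.1 + p.2 ≤ t} := by
        rw [Measure.prod_apply hS]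
        refine setLIntegral_congr_fun measurableSet_Icc fun y hy => ?_
        rw [Measure.restrict_apply (hS.preimage measurable_prodMk_left), ← measure_Ioc]
        congr 1
        ext s
        grind
    _ = ∫⁻ s in Ioc 0 t, ENNReal.ofReal (G (t - s) - Function.leftLim G 0) ∂F.measure := by
        rw [Measure.prod_apply_symm hS]
        refine setLIntegral_congr_fun measurableSet_Ioc fun s hs => ?_
        rw [Measure.restrict_apply (hS.preimage measurable_prodMk_right), ← measure_Icc]
        congr 1
        ext y
        grind

theorem integral_Icc_comp_sub (F G : StieltjesFunction ℝ) (t : ℝ) :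
    ∫ y in Icc 0 t, (F (t - y) - F 0) ∂G.measure
      = ∫ s in Ioc 0 t, (G (t - s) - Function.leftLim G 0) ∂F.measure := by
  have hF : 0 ≤ᵐ[G.measure.restrict (Icc 0 t)] fun y => F (t - y) - F 0 :=
    (ae_restrict_mem measurableSet_Icc).mono fun y hy => sub_nonneg.2 (F.mono (by linarith [hy.2]))
  have hG : 0 ≤ᵐ[F.measure.restrict (Ioc 0 t)] fun s => G (t - s) - Function.leftLim G 0 :=
    (ae_restrict_mem measurableSet_Ioc).mono fun s hs =>
      sub_nonneg.2 (G.mono.leftLim_le (by linarith [hs.2]))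
  rw [integral_eq_lintegral_of_nonneg_ae hF, integral_eq_lintegral_of_nonneg_ae hG,
    lintegral_Icc_comp_sub]
  · exact ((G.mono.comp_antitone antitone_const_tsub).measurable.sub_const _).aestronglyMeasurable
  · exact ((F.mono.comp_antitone antitone_const_tsub).measurable.sub_const _).aestronglyMeasurable

theorem integral_Ioc_sub_eq_intervalIntegral (F : StieltjesFunction ℝ) {t : ℝ} (ht : 0 ≤ t) :
    ∫ s in Ioc 0 t, (t - s) ∂F.measure = ∫ x in 0..t, (F x - F 0) := by
  have := integral_Icc_comp_sub F StieltjesFunction.id t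
  simp only [id_apply, id_leftLim, id_eq, sub_zero, ← Real.volume_eq_stieltjes_id] at this
  rw [← this, integral_Icc_eq_integral_Ioc, ← intervalIntegral.integral_of_le ht,
    intervalIntegral.integral_comp_sub_left (fun x => F x - F 0), sub_self, sub_zero]

def ofMonotoneOnIci (f : ℝ → ℝ) (hf : MonotoneOn f (Ici 0))
    (hrc : ∀ x, 0 ≤ x → ContinuousWithinAt f (Ici x) x) : StieltjesFunction ℝ where
  toFun x := f (max x 0)
  mono' _ _ hab := hf (mem_Ici.2 (le_max_right _ _)) (mem_Ici.2 (le_max_right _ _))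
    (max_le_max_right 0 hab)
  right_continuous' x := (hrc _ (le_max_right x 0)).comp (f := fun y => max y 0)
    (continuous_id.max continuous_const).continuousWithinAt
    fun _ hy => mem_Ici.2 (max_le_max_right 0 hy)

theorem ofMonotoneOnIci_apply {f : ℝ → ℝ} {hf : MonotoneOn f (Ici 0)}
    {hrc : ∀ x, 0 ≤ x → ContinuousWithinAt f (Ici x) x} {x : ℝ} (hx : 0 ≤ x) :
    ofMonotoneOnIci f hf hrc x = f x :=
  show f (max x 0) = f x from congrArg f (max_eq_left hx)

variable (U F : StieltjesFunction ℝ) {t : ℝ}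

theorem integral_Icc_comp_sub_eq_integral_Ioc (hU0 : ∀ x < 0, U x = 0) (hF0 : F 0 = 0) :
    ∫ y in Icc 0 t, F (t - y) ∂U.measure = ∫ s in Ioc 0 t, U (t - s) ∂F.measure := by
  have hU0' : Function.leftLim U 0 = 0 :=
    leftLim_eq_of_tendsto (tendsto_const_nhds.congr' <|
      eventually_nhdsWithin_of_forall fun x hx => (hU0 x hx).symm)
  simpa [hF0, hU0'] using integral_Icc_comp_sub F U t

theorem mul_intervalIntegral_le_integral_Icc_comp_sub {c : ℝ} (hU0 : ∀ x < 0, U x = 0)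
    (hU : ∀ x, 0 ≤ x → c * x ≤ U x) (hF0 : F 0 = 0) (ht : 0 ≤ t) :
    c * ∫ x in 0..t, F x ≤ ∫ y in Icc 0 t, F (t - y) ∂U.measure := by
  have hF := integral_Ioc_sub_eq_intervalIntegral F ht
  simp only [hF0, sub_zero] at hF
  rw [integral_Icc_comp_sub_eq_integral_Ioc U F hU0 hF0, ← hF, ← integral_const_mul]
  refine setIntegral_mono_on
    ((antitone_const_tsub.integrableOn_Ioc 0 t).const_mul c)
    ((U.mono.comp_antitone antitone_const_tsub).integrableOn_Ioc 0 t)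
    measurableSet_Ioc fun s hs => hU (t - s) (by linarith [hs.2])

theorem integral_Icc_comp_sub_le {c a : ℝ} (hU0 : ∀ x < 0, U x = 0)
    (hU : ∀ x, 0 ≤ x → U x ≤ c * x + a) (hF0 : F 0 = 0) (ht : 0 ≤ t) :
    ∫ y in Icc 0 t, F (t - y) ∂U.measure ≤ c * (∫ x in 0..t, F x) + a * F t := by
  have hF := integral_Ioc_sub_eq_intervalIntegral F ht
  simp only [hF0, sub_zero] at hF
  have hlin : IntegrableOn (fun s => c * (t - s)) (Ioc 0 t) F.measure :=
    (antitone_const_tsub.integrableOn_Ioc 0 t).const_mul c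
  have hconst : IntegrableOn (fun _ => a) (Ioc 0 t) F.measure :=
    integrableOn_const measure_Ioc_lt_top.ne
  rw [integral_Icc_comp_sub_eq_integral_Ioc U F hU0 hF0, ← hF, ← integral_const_mul]
  calc ∫ s in Ioc 0 t, U (t - s) ∂F.measure
      ≤ ∫ s in Ioc 0 t, (c * (t - s) + a) ∂F.measure :=
        setIntegral_mono_on ((U.mono.comp_antitone antitone_const_tsub).integrableOn_Ioc 0 t)
          (hlin.add hconst) measurableSet_Ioc fun s hs => hU (t - s) (by linarith [hs.2])
    _ = ∫ s in Ioc 0 t, c * (t - s) ∂F.measure + a * F t := by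
        rw [integral_add hlin hconst, setIntegral_const, measureReal_def, measure_Ioc, hF0,
          sub_zero, ENNReal.toReal_ofReal (hF0 ▸ F.mono ht), smul_eq_mul, mul_comm]

end StieltjesFunction

theorem Real.rpow_le_one_add_rpow {u e P : ℝ} (hu : 0 ≤ u) (he : 0 ≤ e) (heP : e ≤ P) :
    u ^ e ≤ 1 + u ^ P := by
  rcases le_total u 1 with h | h
  · linarith [Real.rpow_le_one hu h he, Real.rpow_nonneg hu P]
  · linarith [Real.rpow_le_rpow_of_exponent_le h heP]

theorem Real.rpow_add_one_div_le_one_add_rpow {u p P : ℝ} (hu : 0 ≤ u) (hp : 0 ≤ p)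
    (hpP : p + 1 ≤ P) : u ^ (p + 1) / (p + 1) ≤ 1 + u ^ P :=
  (div_le_self (by positivity) (by linarith)).trans (rpow_le_one_add_rpow hu (by linarith) hpP)

theorem intervalIntegrable_mul_rpow_add_add_mul_rpow {c α β q p a b : ℝ} (hq : -1 < q)
    (hp : -1 < p) : IntervalIntegrable (fun x => c * x ^ q + α + β * x ^ p) volume a b :=
  (((intervalIntegral.intervalIntegrable_rpow' hq).const_mul c).add intervalIntegrable_const).add
    ((intervalIntegral.intervalIntegrable_rpow' hp).const_mul β)

theorem integral_mul_rpow_add_add_mul_rpow {c α β q p t : ℝ} (hq : -1 < q) (hp : -1 < p) :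
    ∫ x in 0..t, (c * x ^ q + α + β * x ^ p)
      = c * (t ^ (q + 1) / (q + 1)) + α * t + β * (t ^ (p + 1) / (p + 1)) := by
  have hiq := (intervalIntegral.intervalIntegrable_rpow' hq (a := 0) (b := t)).const_mul c
  have hip := (intervalIntegral.intervalIntegrable_rpow' hp (a := 0) (b := t)).const_mul β
  rw [intervalIntegral.integral_add (hiq.add intervalIntegrable_const) hip,
    intervalIntegral.integral_add hiq intervalIntegrable_const, intervalIntegral.integral_const_mul,
    intervalIntegral.integral_const_mul, integral_rpow (Or.inl hq), integral_rpow (Or.inl hp),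
    intervalIntegral.integral_const, Real.zero_rpow (by linarith), Real.zero_rpow (by linarith)]
  simp only [sub_zero, smul_eq_mul, mul_comm t]

section RenewalBounds

variable {U F : StieltjesFunction ℝ} {m c q p P : ℝ}

theorem exists_le_integral_Icc_comp_sub_sub {β0 β1 : ℝ} (hm : 0 ≤ m)
    (hU0 : ∀ x < 0, U x = 0) (hU : ∀ x, 0 ≤ x → m⁻¹ * x ≤ U x) (hF0 : F 0 = 0)
    (hq : -1 < q) (hp : 0 ≤ p) (hpP : p + 1 ≤ P) (hβ0 : β0 ≤ 0) (hβ1 : β1 ≤ 0)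
    (hF : ∀ x, 0 < x → β0 + β1 * x ^ p ≤ F x - c * x ^ q) :
    ∃ b0 b1 : ℝ, b0 ≤ 0 ∧ b1 ≤ 0 ∧ ∀ t, 0 < t →
      b0 + b1 * t ^ P
        ≤ ∫ y in Icc 0 t, F (t - y) ∂U.measure - c * (m * (q + 1))⁻¹ * t ^ (q + 1) := by
  have hb : m⁻¹ * (β0 + β1) ≤ 0 := mul_nonpos_of_nonneg_of_nonpos (by positivity) (by linarith)
  refine ⟨_, _, hb, hb, fun t ht => ?_⟩
  have hint : c * (t ^ (q + 1) / (q + 1)) + β0 * t + β1 * (t ^ (p + 1) / (p + 1))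
      ≤ ∫ x in 0..t, F x := by
    rw [← integral_mul_rpow_add_add_mul_rpow hq (by linarith)]
    refine intervalIntegral.integral_mono_on_of_le_Ioo ht.le
      (intervalIntegrable_mul_rpow_add_add_mul_rpow hq (by linarith)) F.mono.intervalIntegrable
      fun x hx => ?_
    linarith [hF x hx.1]
  have ht1 : t ≤ 1 + t ^ P := by
    simpa using Real.rpow_le_one_add_rpow ht.le zero_le_one (by linarith)
  have htp := Real.rpow_add_one_div_le_one_add_rpow ht.le hp hpP
  calc m⁻¹ * (β0 + β1) + m⁻¹ * (β0 + β1) * t ^ P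
      = m⁻¹ * (β0 * (1 + t ^ P) + β1 * (1 + t ^ P)) := by ring
    _ ≤ m⁻¹ * (β0 * t + β1 * (t ^ (p + 1) / (p + 1))) := by
        gcongr m⁻¹ * ?_
        exact add_le_add (mul_le_mul_of_nonpos_left ht1 hβ0) (mul_le_mul_of_nonpos_left htp hβ1)
    _ = m⁻¹ * (c * (t ^ (q + 1) / (q + 1)) + β0 * t + β1 * (t ^ (p + 1) / (p + 1)))
          - c * (m * (q + 1))⁻¹ * t ^ (q + 1) := by rw [mul_inv]; ring
    _ ≤ ∫ y in Icc 0 t, F (t - y) ∂U.measure - c * (m * (q + 1))⁻¹ * t ^ (q + 1) := by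
        gcongr
        exact (mul_le_mul_of_nonneg_left hint (by positivity)).trans
          (StieltjesFunction.mul_intervalIntegral_le_integral_Icc_comp_sub U F hU0 hU hF0 ht.le)

theorem exists_integral_Icc_comp_sub_sub_le {a α0 α1 : ℝ} (hm : 0 < m) (ha : 0 ≤ a)
    (hU0 : ∀ x < 0, U x = 0) (hU : ∀ x, 0 ≤ x → U x ≤ m⁻¹ * x + a) (hF0 : F 0 = 0)
    (hc : 0 ≤ c) (hq : 0 ≤ q) (hqP : q ≤ P) (hp : 0 ≤ p) (hpP : p + 1 ≤ P)
    (hα0 : 0 < α0) (hα1 : 0 ≤ α1) (hF : ∀ x, 0 < x → F x - c * x ^ q ≤ α0 + α1 * x ^ p) :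
    ∃ a0 a1 : ℝ, 0 < a0 ∧ 0 < a1 ∧ ∀ t, 0 < t →
      ∫ y in Icc 0 t, F (t - y) ∂U.measure - c * (m * (q + 1))⁻¹ * t ^ (q + 1)
        ≤ a0 + a1 * t ^ P := by
  have ha1 : 0 < m⁻¹ * (α0 + α1) + a * (c + α1) := by positivity
  refine ⟨a * α0 + (m⁻¹ * (α0 + α1) + a * (c + α1)), _, by positivity, ha1, fun t ht => ?_⟩
  have hint : ∫ x in 0..t, F x
      ≤ c * (t ^ (q + 1) / (q + 1)) + α0 * t + α1 * (t ^ (p + 1) / (p + 1)) := by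
    rw [← integral_mul_rpow_add_add_mul_rpow (by linarith) (by linarith)]
    refine intervalIntegral.integral_mono_on_of_le_Ioo ht.le F.mono.intervalIntegrable
      (intervalIntegrable_mul_rpow_add_add_mul_rpow (by linarith) (by linarith)) fun x hx => ?_
    linarith [hF x hx.1]
  have hFt : F t ≤ c * t ^ q + α0 + α1 * t ^ p := by linarith [hF t ht]
  have ht1 : t ≤ 1 + t ^ P := by
    simpa using Real.rpow_le_one_add_rpow ht.le zero_le_one (by linarith)
  have htp := Real.rpow_add_one_div_le_one_add_rpow ht.le hp hpP
  calc ∫ y in Icc 0 t, F (t - y) ∂U.measure - c * (m * (q + 1))⁻¹ * t ^ (q + 1)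
      ≤ m⁻¹ * (c * (t ^ (q + 1) / (q + 1)) + α0 * t + α1 * (t ^ (p + 1) / (p + 1)))
          + a * (c * t ^ q + α0 + α1 * t ^ p) - c * (m * (q + 1))⁻¹ * t ^ (q + 1) := by
        gcongr
        exact (StieltjesFunction.integral_Icc_comp_sub_le U F hU0 hU hF0 ht.le).trans (by gcongr)
    _ = m⁻¹ * (α0 * t + α1 * (t ^ (p + 1) / (p + 1))) + a * (c * t ^ q + α0 + α1 * t ^ p) := by
        rw [mul_inv]; ring
    _ ≤ m⁻¹ * (α0 * (1 + t ^ P) + α1 * (1 + t ^ P))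
          + a * (c * (1 + t ^ P) + α0 + α1 * (1 + t ^ P)) := by
        gcongr
        · exact Real.rpow_le_one_add_rpow ht.le hq hqP
        · exact Real.rpow_le_one_add_rpow ht.le hp (by linarith)
    _ = a * α0 + (m⁻¹ * (α0 + α1) + a * (c + α1))
          + (m⁻¹ * (α0 + α1) + a * (c + α1)) * t ^ P := by ring

end RenewalBounds

theorem renewal_convolution_power_bounds_general
    (m a0star : ℝ) (hm : 0 < m) (ha0star : 0 < a0star)
    (U : StieltjesFunction ℝ) (hU0 : ∀ t < 0, U t = 0)
    (hUbound : ∀ t, 0 ≤ t → 0 ≤ U t - m⁻¹ * t ∧ U t - m⁻¹ * t ≤ a0star)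
    (f : ℝ → ℝ) (hfmono : MonotoneOn f (Set.Ici 0))
    (hfrc : ∀ x, 0 ≤ x → ContinuousWithinAt f (Set.Ici x) x)
    (hf0 : f 0 = 0)
    (c0 q α0 α1 r1 r2 β0 β1 : ℝ)
    (hc0 : 0 < c0) (hq : 0 < q) (hα0 : 0 < α0) (hα1 : 0 < α1)
    (hr1' : r1 ≤ q) (hr2' : r2 ≤ q)
    (hβ0 : β0 < 0) (hβ1 : β1 < 0)
    (hflow : ∀ x, 0 < x → β0 + β1 * x ^ (q - r2) ≤ f x - c0 * x ^ q)
    (hfup : ∀ x, 0 < x → f x - c0 * x ^ q ≤ α0 + α1 * x ^ (q - r1)) :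
    ∃ a0 a1 b0 b1 : ℝ, 0 < a0 ∧ 0 < a1 ∧ b0 ≤ 0 ∧ b1 ≤ 0 ∧
      ∀ t : ℝ, 0 < t →
        b0 + b1 * t ^ (q - min (r2 - 1) 0)
            ≤ (∫ y in Set.Icc (0 : ℝ) t, f (t - y) ∂U.measure)
                - c0 * (m * (q + 1))⁻¹ * t ^ (q + 1)
          ∧ (∫ y in Set.Icc (0 : ℝ) t, f (t - y) ∂U.measure)
                - c0 * (m * (q + 1))⁻¹ * t ^ (q + 1)
            ≤ a0 + a1 * t ^ (q - min (r1 - 1) 0) := by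
  set F := StieltjesFunction.ofMonotoneOnIci f hfmono hfrc
  have hFf {x : ℝ} (hx : 0 ≤ x) : F x = f x := StieltjesFunction.ofMonotoneOnIci_apply hx
  have hF0 : F 0 = 0 := (hFf le_rfl).trans hf0
  have hV (t : ℝ) : ∫ y in Icc 0 t, f (t - y) ∂U.measure = ∫ y in Icc 0 t, F (t - y) ∂U.measure :=
    setIntegral_congr_fun measurableSet_Icc fun y hy => (hFf (by linarith [hy.2])).symm
  have hP (r : ℝ) : q ≤ q - min (r - 1) 0 ∧ q - r + 1 ≤ q - min (r - 1) 0 :=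
    ⟨by linarith [min_le_right (r - 1) 0], by linarith [min_le_left (r - 1) 0]⟩
  obtain ⟨a0, a1, ha0, ha1, hup⟩ := exists_integral_Icc_comp_sub_sub_le hm ha0star.le hU0
    (fun x hx => by linarith [(hUbound x hx).2]) hF0 hc0.le hq.le (hP r1).1 (by linarith)
    (hP r1).2 hα0 hα1.le fun x hx => hFf hx.le ▸ hfup x hx
  obtain ⟨b0, b1, hb0, hb1, hlow⟩ := exists_le_integral_Icc_comp_sub_sub hm.le hU0
    (fun x hx => by linarith [(hUbound x hx).1]) hF0 (by linarith) (by linarith) (hP r2).2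
    hβ0.le hβ1.le fun x hx => hFf hx.le ▸ hflow x hx
  exact ⟨a0, a1, b0, b1, ha0, ha1, hb0, hb1, fun t ht => hV t ▸ ⟨hlow t ht, hup t ht⟩⟩

theorem renewal_convolution_power_bounds
    (m a0star : ℝ) (hm : 0 < m) (ha0star : 0 < a0star)
    (U : StieltjesFunction ℝ) (hU0 : ∀ t < 0, U t = 0)
    (hUbound : ∀ t, 0 ≤ t → 0 ≤ U t - m⁻¹ * t ∧ U t - m⁻¹ * t ≤ a0star)
    (f : ℝ → ℝ) (hfmono : MonotoneOn f (Set.Ici 0))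
    (hfrc : ∀ x, 0 ≤ x → ContinuousWithinAt f (Set.Ici x) x)
    (hfnonneg : ∀ x, 0 ≤ x → 0 ≤ f x) (hf0 : f 0 = 0)
    (c0 q α0 α1 r1 r2 β0 β1 : ℝ)
    (hc0 : 0 < c0) (hq : 0 < q) (hα0 : 0 < α0) (hα1 : 0 < α1)
    (hr1 : 0 < r1) (hr1' : r1 ≤ q) (hr2 : 0 < r2) (hr2' : r2 ≤ q)
    (hβ0 : β0 < 0) (hβ1 : β1 < 0)
    (hflow : ∀ x, 0 < x → β0 + β1 * x ^ (q - r2) ≤ f x - c0 * x ^ q)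
    (hfup : ∀ x, 0 < x → f x - c0 * x ^ q ≤ α0 + α1 * x ^ (q - r1)) :
    ∃ a0 a1 b0 b1 : ℝ, 0 < a0 ∧ 0 < a1 ∧ b0 ≤ 0 ∧ b1 ≤ 0 ∧
      ∀ t : ℝ, 0 < t →
        b0 + b1 * t ^ (q - min (r2 - 1) 0)
            ≤ (∫ y in Set.Icc (0 : ℝ) t, f (t - y) ∂U.measure)
                - c0 * (m * (q + 1))⁻¹ * t ^ (q + 1)
          ∧ (∫ y in Set.Icc (0 : ℝ) t, f (t - y) ∂U.measure)
                - c0 * (m * (q + 1))⁻¹ * t ^ (q + 1)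
            ≤ a0 + a1 * t ^ (q - min (r1 - 1) 0) :=
  renewal_convolution_power_bounds_general m a0star hm ha0star U hU0 hUbound f hfmono hfrc hf0 c0 q
    α0 α1 r1 r2 β0 β1 hc0 hq hα0 hα1 hr1' hr2' hβ0 hβ1 hflow hfup
end
end

section
/- Let $T>0$, $M\ge0$, $\beta>0$ and let $W:\mathbb{R}\to\mathbb{R}$ satisfy $W(x)=0$ for all $x\le 0$ and $|W(x)-W(y)|\le M|x-y|^{\beta}$ for all $x,y\in[0,T]$. For $\kappa>0$ define $R(x):=\kappa\int_0^x W(x-z)\,z^{\kappa-1}\,\mathrm{d}z$ for $x\ge0$. Then $|R(x)-R(y)|\le M\,T^{\kappa}\,|x-y|^{\beta}$ for all $x,y\in[0,T]$. -/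
open MeasureTheory intervalIntegral Filter

noncomputable section

/-- Hölder bound extends to all of `Iic T` since `W = 0` on nonpositives. -/
lemma holder_ext (T M β : ℝ) (hT : 0 < T) (hM : 0 ≤ M) (hβ : 0 < β)
    (W : ℝ → ℝ) (hW0 : ∀ x ≤ (0 : ℝ), W x = 0)
    (hWhold : ∀ x ∈ Set.Icc (0 : ℝ) T, ∀ y ∈ Set.Icc (0 : ℝ) T,
        |W x - W y| ≤ M * |x - y| ^ β) :
    ∀ u ∈ Set.Iic T, ∀ v ∈ Set.Iic T, |W u - W v| ≤ M * |u - v| ^ β := by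
  have hW00 : W 0 = 0 := hW0 0 le_rfl
  have base : ∀ u ∈ Set.Iic T, ∀ v ∈ Set.Iic T, u ≤ v →
      |W u - W v| ≤ M * |u - v| ^ β := by
    intro u hu v hv huv
    rcases le_or_gt v 0 with hv0 | hv0
    · rw [hW0 u (huv.trans hv0), hW0 v hv0]
      simpa using mul_nonneg hM (Real.rpow_nonneg (abs_nonneg _) _)
    rcases le_or_gt u 0 with hu0 | hu0
    · have h1 : |W 0 - W v| ≤ M * |0 - v| ^ β :=
        hWhold 0 ⟨le_rfl, hT.le⟩ v ⟨hv0.le, hv⟩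
      rw [hW0 u hu0, ← hW00]
      refine h1.trans (mul_le_mul_of_nonneg_left ?_ hM)
      apply Real.rpow_le_rpow (abs_nonneg _) _ hβ.le
      rw [abs_sub_comm, abs_sub_comm u v, abs_of_nonneg (by linarith),
        abs_of_nonneg (by linarith)]
      linarith
    · exact hWhold u ⟨hu0.le, hu⟩ v ⟨hv0.le, hv⟩
  intro u hu v hv
  rcases le_total u v with h | h
  · exact base u hu v hv h
  · rw [abs_sub_comm, abs_sub_comm u v]; exact base v hv u hu h

lemma holder_contOn (T M β : ℝ) (hβ : 0 < β) (W : ℝ → ℝ)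
    (h : ∀ u ∈ Set.Iic T, ∀ v ∈ Set.Iic T, |W u - W v| ≤ M * |u - v| ^ β) :
    ContinuousOn W (Set.Iic T) := by
  intro v hv
  rw [ContinuousWithinAt, tendsto_iff_dist_tendsto_zero]
  have hcont : Tendsto (fun u => M * |u - v| ^ β) (nhdsWithin v (Set.Iic T)) (nhds 0) := by
    have : ContinuousAt (fun u : ℝ => M * |u - v| ^ β) v := by
      apply ContinuousAt.mul continuousAt_const
      apply ContinuousAt.comp (Real.continuousAt_rpow_const _ _ (Or.inr hβ.le))
      exact (continuous_abs.comp (continuous_id.sub continuous_const)).continuousAt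
    have h0 : M * |v - v| ^ β = 0 := by
      simp [Real.zero_rpow hβ.ne']
    have h2 : Tendsto (fun u : ℝ => M * |u - v| ^ β) (nhdsWithin v (Set.Iic T))
        (nhds (M * |v - v| ^ β)) := this.continuousWithinAt
    rwa [h0] at h2
  apply squeeze_zero' ?_ ?_ hcont
  · filter_upwards with u using dist_nonneg
  · filter_upwards [self_mem_nhdsWithin] with u hu
    simpa [Real.dist_eq] using h u hu v hv

lemma rl_key
    (T M β : ℝ) (hT : 0 < T) (hM : 0 ≤ M) (hβ : 0 < β)
    (W : ℝ → ℝ) (hW0 : ∀ x ≤ (0 : ℝ), W x = 0)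
    (hWhold : ∀ x ∈ Set.Icc (0 : ℝ) T, ∀ y ∈ Set.Icc (0 : ℝ) T,
        |W x - W y| ≤ M * |x - y| ^ β)
    (κ : ℝ) (hκ : 0 < κ)
    (x : ℝ) (hx : x ∈ Set.Icc (0 : ℝ) T) (y : ℝ) (hy : y ∈ Set.Icc (0 : ℝ) T)
    (hxy : y ≤ x) :
    |(κ * ∫ z in (0 : ℝ)..x, W (x - z) * z ^ (κ - 1))
        - (κ * ∫ z in (0 : ℝ)..y, W (y - z) * z ^ (κ - 1))|
      ≤ M * T ^ κ * |x - y| ^ β := by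
  obtain ⟨hx0, hxT⟩ := hx
  obtain ⟨hy0, hyT⟩ := hy
  have hW' := holder_ext T M β hT hM hβ W hW0 hWhold
  have hWc := holder_contOn T M β hβ W hW'
  have hrpow : IntervalIntegrable (fun z : ℝ => z ^ (κ - 1)) volume 0 x :=
    intervalIntegral.intervalIntegrable_rpow' (by linarith)
  have hContx : ContinuousOn (fun z => W (x - z)) (Set.uIcc 0 x) := by
    apply hWc.comp (Continuous.continuousOn (by fun_prop))
    intro z hz
    rw [Set.uIcc_of_le hx0] at hz
    simp only [Set.mem_Iic]
    linarith [hz.1]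
  have hConty : ContinuousOn (fun z => W (y - z)) (Set.uIcc 0 x) := by
    apply hWc.comp (Continuous.continuousOn (by fun_prop))
    intro z hz
    rw [Set.uIcc_of_le hx0] at hz
    simp only [Set.mem_Iic]
    linarith [hz.1]
  have hfx : IntervalIntegrable (fun z => W (x - z) * z ^ (κ - 1)) volume 0 x :=
    hrpow.continuousOn_mul hContx
  have hfy : IntervalIntegrable (fun z => W (y - z) * z ^ (κ - 1)) volume 0 x :=
    hrpow.continuousOn_mul hConty
  have hmemy : y ∈ Set.uIcc (0:ℝ) x := by rw [Set.uIcc_of_le hx0]; exact ⟨hy0, hxy⟩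
  have hmem0 : (0:ℝ) ∈ Set.uIcc (0:ℝ) x := Set.left_mem_uIcc
  have hmemx : x ∈ Set.uIcc (0:ℝ) x := Set.right_mem_uIcc
  have hfy1 : IntervalIntegrable (fun z => W (y - z) * z ^ (κ - 1)) volume 0 y :=
    hfy.mono_set (Set.uIcc_subset_uIcc hmem0 hmemy)
  have hfy2 : IntervalIntegrable (fun z => W (y - z) * z ^ (κ - 1)) volume y x :=
    hfy.mono_set (Set.uIcc_subset_uIcc hmemy hmemx)
  have hzero : (∫ z in y..x, W (y - z) * z ^ (κ - 1)) = 0 := by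
    rw [intervalIntegral.integral_congr (g := fun _ => 0), intervalIntegral.integral_zero]
    intro z hz
    rw [Set.uIcc_of_le hxy] at hz
    show W (y - z) * z ^ (κ - 1) = 0
    rw [hW0 (y - z) (by linarith [hz.1]), zero_mul]
  have heq : (∫ z in (0:ℝ)..y, W (y - z) * z ^ (κ - 1))
      = ∫ z in (0:ℝ)..x, W (y - z) * z ^ (κ - 1) := by
    rw [← intervalIntegral.integral_add_adjacent_intervals hfy1 hfy2, hzero, add_zero]
  set C := M * |x - y| ^ β with hC
  have hC0 : 0 ≤ C := mul_nonneg hM (Real.rpow_nonneg (abs_nonneg _) _)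
  have hdiff : (κ * ∫ z in (0:ℝ)..x, W (x - z) * z ^ (κ - 1))
      - (κ * ∫ z in (0:ℝ)..y, W (y - z) * z ^ (κ - 1))
      = κ * ∫ z in (0:ℝ)..x, (W (x - z) - W (y - z)) * z ^ (κ - 1) := by
    rw [heq, ← mul_sub, ← intervalIntegral.integral_sub hfx hfy]
    congr 1
    apply intervalIntegral.integral_congr
    intro z _
    ring
  rw [hdiff, abs_mul, abs_of_pos hκ]
  have hpt : ∀ z ∈ Set.Icc (0:ℝ) x,
      |(W (x - z) - W (y - z)) * z ^ (κ - 1)| ≤ C * z ^ (κ - 1) := by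
    intro z hz
    rw [abs_mul, abs_of_nonneg (Real.rpow_nonneg hz.1 _)]
    apply mul_le_mul_of_nonneg_right _ (Real.rpow_nonneg hz.1 _)
    have h1 : x - z ∈ Set.Iic T := by simp only [Set.mem_Iic]; linarith [hz.1]
    have h2 : y - z ∈ Set.Iic T := by simp only [Set.mem_Iic]; linarith [hz.1]
    simpa using hW' (x - z) h1 (y - z) h2
  have habs : |∫ z in (0:ℝ)..x, (W (x - z) - W (y - z)) * z ^ (κ - 1)|
      ≤ ∫ z in (0:ℝ)..x, C * z ^ (κ - 1) := by
    have hsub : IntervalIntegrable (fun z => (W (x - z) - W (y - z)) * z ^ (κ - 1)) volume 0 x := by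
      have := (hContx.sub hConty)
      exact hrpow.continuousOn_mul this
    calc |∫ z in (0:ℝ)..x, (W (x - z) - W (y - z)) * z ^ (κ - 1)|
        ≤ ∫ z in (0:ℝ)..x, |(W (x - z) - W (y - z)) * z ^ (κ - 1)| :=
          intervalIntegral.abs_integral_le_integral_abs hx0
      _ ≤ ∫ z in (0:ℝ)..x, C * z ^ (κ - 1) := by
          apply intervalIntegral.integral_mono_on hx0 hsub.abs (hrpow.const_mul C)
          exact hpt
  have hval : (∫ z in (0:ℝ)..x, C * z ^ (κ - 1)) = C * (x ^ κ / κ) := by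
    rw [intervalIntegral.integral_const_mul, integral_rpow (Or.inl (by linarith))]
    congr 1
    rw [sub_add_cancel, Real.zero_rpow hκ.ne', sub_zero]
  calc κ * |∫ z in (0:ℝ)..x, (W (x - z) - W (y - z)) * z ^ (κ - 1)|
      ≤ κ * (C * (x ^ κ / κ)) := by
        rw [← hval]; exact mul_le_mul_of_nonneg_left habs hκ.le
    _ = C * x ^ κ := by field_simp
    _ ≤ C * T ^ κ := by
        apply mul_le_mul_of_nonneg_left _ hC0
        exact Real.rpow_le_rpow hx0 hxT hκ.le
    _ = M * T ^ κ * |x - y| ^ β := by rw [hC]; ring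

theorem riemann_liouville_integral_inherits_holder
    (T M β : ℝ) (hT : 0 < T) (hM : 0 ≤ M) (hβ : 0 < β)
    (W : ℝ → ℝ) (hW0 : ∀ x ≤ (0 : ℝ), W x = 0)
    (hWhold : ∀ x ∈ Set.Icc (0 : ℝ) T, ∀ y ∈ Set.Icc (0 : ℝ) T,
        |W x - W y| ≤ M * |x - y| ^ β)
    (κ : ℝ) (hκ : 0 < κ)
    (x : ℝ) (hx : x ∈ Set.Icc (0 : ℝ) T) (y : ℝ) (hy : y ∈ Set.Icc (0 : ℝ) T) :
    |(κ * ∫ z in (0 : ℝ)..x, W (x - z) * z ^ (κ - 1))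
        - (κ * ∫ z in (0 : ℝ)..y, W (y - z) * z ^ (κ - 1))|
      ≤ M * T ^ κ * |x - y| ^ β := by
  rcases le_total y x with h | h
  · exact rl_key T M β hT hM hβ W hW0 hWhold κ hκ x hx y hy h
  · rw [abs_sub_comm, abs_sub_comm x y]
    exact rl_key T M β hT hM hβ W hW0 hWhold κ hκ y hy x hx h
end
end
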